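/- arXiv:1909.11078 — 8 statements merged into one kernel-verified Lean document; each statement's English description precedes it below -/
import Mathlib

section
/- Let A_1, ..., A_n be events in a probability space and let G be a negative dependency graph for these events. Suppose x_1, ..., x_n ∈ [0,1) satisfy P(A_i) ≤ x_i · ∏_{j ∈ J_i} (1 - x_j) for every i ∈ [n], where J_i is the set of neighbors of i in G. Then P(∩_{i=1}^n A_i^c) ≥ ∏_{i=1}^n (1 - x_i) > 0. -/
/-!
Write `B S = ⋂ j ∈ S, (A j)ᶜ`. By strong induction on `S` one shows `P(A i ∩ B S) ≤ x i · P(B S)`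
for every `i ∉ S`, which is the same as `P(B (insert i S)) ≥ (1 - x i) · P(B S)`; chaining these
steps gives `P(B S) ≥ ∏_{S \ T} (1 - x j) · P(B T)` for `T ⊆ S`. For the induction step take
for `T` the non-neighbours of `i` in `S`: negative dependency gives
`P(A i ∩ B S) ≤ P(A i ∩ B T) ≤ P(A i) · P(B T)`, and the neighbour factors `∏_{S \ T} (1 - x j)`
in the bound on `P(A i)` are exactly what the chain needs to pass from `P(B T)` back to `P(B S)`.
-/

open MeasureTheory Finset

theorem Finset.prod_mul_le_of_mul_le_insert {ι : Type*} [DecidableEq ι] {Q : Finset ι → ℝ}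
    {c : ι → ℝ} (hc : ∀ j, 0 ≤ c j) {S : Finset ι}
    (hstep : ∀ U j, j ∉ U → insert j U ⊆ S → c j * Q U ≤ Q (insert j U))
    {T : Finset ι} (hTS : T ⊆ S) :
    (∏ j ∈ S \ T, c j) * Q T ≤ Q S := by
  suffices key : ∀ D : Finset ι, Disjoint T D → T ∪ D ⊆ S → (∏ j ∈ D, c j) * Q T ≤ Q (T ∪ D) by
    simpa only [union_sdiff_of_subset hTS] using
      key (S \ T) disjoint_sdiff (union_sdiff_of_subset hTS).subset
  intro D
  induction D using Finset.induction_on with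
  | empty => simp
  | insert a D haD ih =>
    intro hdisj hsub
    have haT : a ∉ T := disjoint_right.mp hdisj (mem_insert_self a D)
    have hD : T ∪ D ⊆ S := subset_trans (union_subset_union_right (subset_insert a D)) hsub
    calc (∏ j ∈ insert a D, c j) * Q T = c a * ((∏ j ∈ D, c j) * Q T) := by
          rw [prod_insert haD, mul_assoc]
      _ ≤ c a * Q (T ∪ D) :=
          mul_le_mul_of_nonneg_left (ih (disjoint_of_subset_right (subset_insert a D) hdisj) hD)
            (hc a)
      _ ≤ Q (insert a (T ∪ D)) :=
          hstep _ a (by simp [haT, haD]) (by rwa [union_insert] at hsub)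
      _ = Q (T ∪ insert a D) := by rw [union_insert]

def avoidSet {Ω ι : Type*} (A : ι → Set Ω) (S : Finset ι) : Set Ω := ⋂ j ∈ S, (A j)ᶜ

section AvoidSet

variable {Ω ι : Type*} {A : ι → Set Ω}

theorem avoidSet_empty : avoidSet A ∅ = Set.univ := by simp [avoidSet]

theorem avoidSet_univ [Fintype ι] : avoidSet A univ = ⋂ i, (A i)ᶜ := by simp [avoidSet]

theorem avoidSet_anti {S T : Finset ι} (h : T ⊆ S) : avoidSet A S ⊆ avoidSet A T :=
  Set.biInter_subset_biInter_left h

theorem avoidSet_insert [DecidableEq ι] (j : ι) (S : Finset ι) :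
    avoidSet A (insert j S) = avoidSet A S \ A j := by
  rw [avoidSet, set_biInter_insert, Set.sdiff_eq, Set.inter_comm, avoidSet]

end AvoidSet

section LocalLemma

variable {Ω ι : Type*} [MeasurableSpace Ω] {μ : Measure Ω} {A : ι → Set Ω}

/-- `N i` plays the role of the neighbourhood `J_i`; the conditional probability of the paper is
cleared of its denominator. -/
def IsNegativeDependency (μ : Measure Ω) (A : ι → Set Ω) (N : ι → Finset ι) : Prop :=
  ∀ i (S : Finset ι), i ∉ S → Disjoint S (N i) → 0 < μ.real (avoidSet A S) →
    μ.real (A i ∩ avoidSet A S) ≤ μ.real (A i) * μ.real (avoidSet A S)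

variable [DecidableEq ι]

theorem one_sub_mul_le_measureReal_avoidSet_insert [IsFiniteMeasure μ] {j : ι}
    (hAj : MeasurableSet (A j)) {S : Finset ι} {y : ℝ}
    (h : μ.real (A j ∩ avoidSet A S) ≤ y * μ.real (avoidSet A S)) :
    (1 - y) * μ.real (avoidSet A S) ≤ μ.real (avoidSet A (insert j S)) := by
  have hsplit := measureReal_inter_add_sdiff (μ := μ) (s := avoidSet A S) hAj
  rw [Set.inter_comm] at hsplit
  rw [avoidSet_insert]
  linarith

theorem prod_one_sub_mul_le_measureReal_avoidSet [IsFiniteMeasure μ]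
    (hA : ∀ i, MeasurableSet (A i)) {x : ι → ℝ} (hx : ∀ i, x i ≤ 1) {S : Finset ι}
    (hbound : ∀ U ⊂ S, ∀ i ∉ U,
      μ.real (A i ∩ avoidSet A U) ≤ x i * μ.real (avoidSet A U))
    {T : Finset ι} (hTS : T ⊆ S) :
    (∏ j ∈ S \ T, (1 - x j)) * μ.real (avoidSet A T) ≤ μ.real (avoidSet A S) := by
  refine prod_mul_le_of_mul_le_insert (Q := fun U ↦ μ.real (avoidSet A U))
    (fun j ↦ sub_nonneg.mpr (hx j)) (fun U j hjU hsub ↦ ?_) hTS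
  have hUS : U ⊂ S := Finset.ssubset_of_ssubset_of_subset (ssubset_insert hjU) hsub
  exact one_sub_mul_le_measureReal_avoidSet_insert (hA j) (hbound U hUS j hjU)

variable [IsProbabilityMeasure μ] {N : ι → Finset ι} {x : ι → ℝ}

theorem prod_one_sub_le_measureReal_avoidSet_of_bound (hA : ∀ i, MeasurableSet (A i))
    (hx : ∀ i, x i ≤ 1) {S : Finset ι}
    (hbound : ∀ U ⊂ S, ∀ i ∉ U,
      μ.real (A i ∩ avoidSet A U) ≤ x i * μ.real (avoidSet A U)) :
    ∏ j ∈ S, (1 - x j) ≤ μ.real (avoidSet A S) := by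
  simpa [avoidSet_empty] using
    prod_one_sub_mul_le_measureReal_avoidSet hA hx hbound (empty_subset S)

theorem measureReal_inter_avoidSet_le (hA : ∀ i, MeasurableSet (A i))
    (hN : IsNegativeDependency μ A N) (hx : ∀ i, x i ∈ Set.Ico (0 : ℝ) 1)
    (hP : ∀ i, μ.real (A i) ≤ x i * ∏ j ∈ N i, (1 - x j)) (S : Finset ι) :
    ∀ i ∉ S, μ.real (A i ∩ avoidSet A S) ≤ x i * μ.real (avoidSet A S) := by
  induction S using Finset.strongInduction with
  | H S ih =>
  intro i hiS
  have hx1 : ∀ j, x j ≤ 1 := fun j ↦ (hx j).2.le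
  set T := S.filter (· ∉ N i)
  have hTS : T ⊆ S := filter_subset _ _
  have hST : S \ T ⊆ N i := fun j hj ↦ by
    simp only [T, mem_sdiff, mem_filter, not_and, not_not] at hj
    exact hj.2 hj.1
  have hchain := prod_one_sub_mul_le_measureReal_avoidSet hA hx1 ih hTS
  have hT_pos : 0 < μ.real (avoidSet A T) :=
    calc 0 < ∏ j ∈ S, (1 - x j) := prod_pos fun j _ ↦ sub_pos.mpr (hx j).2
      _ ≤ μ.real (avoidSet A S) := prod_one_sub_le_measureReal_avoidSet_of_bound hA hx1 ih
      _ ≤ μ.real (avoidSet A T) := measureReal_mono (avoidSet_anti hTS)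
  have hneighbours : ∏ j ∈ N i, (1 - x j) ≤ ∏ j ∈ S \ T, (1 - x j) :=
    prod_le_prod_of_subset_of_le_one hST (fun j _ ↦ sub_nonneg.mpr (hx1 j))
      (fun j _ _ ↦ sub_le_self 1 (hx j).1)
  calc μ.real (A i ∩ avoidSet A S) ≤ μ.real (A i ∩ avoidSet A T) :=
        measureReal_mono (Set.inter_subset_inter_right _ (avoidSet_anti hTS))
    _ ≤ μ.real (A i) * μ.real (avoidSet A T) :=
        hN i T (fun h ↦ hiS (hTS h)) (disjoint_left.mpr fun _ hj ↦ (mem_filter.mp hj).2) hT_pos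
    _ ≤ x i * (∏ j ∈ S \ T, (1 - x j)) * μ.real (avoidSet A T) := by
        gcongr
        exact (hP i).trans (mul_le_mul_of_nonneg_left hneighbours (hx i).1)
    _ ≤ x i * μ.real (avoidSet A S) := by
        rw [mul_assoc]
        exact mul_le_mul_of_nonneg_left hchain (hx i).1

theorem prod_one_sub_le_measureReal_avoidSet (hA : ∀ i, MeasurableSet (A i))
    (hN : IsNegativeDependency μ A N) (hx : ∀ i, x i ∈ Set.Ico (0 : ℝ) 1)
    (hP : ∀ i, μ.real (A i) ≤ x i * ∏ j ∈ N i, (1 - x j)) (S : Finset ι) :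
    ∏ j ∈ S, (1 - x j) ≤ μ.real (avoidSet A S) :=
  prod_one_sub_le_measureReal_avoidSet_of_bound hA (fun i ↦ (hx i).2.le)
    fun U _ ↦ measureReal_inter_avoidSet_le hA hN hx hP U

end LocalLemma

theorem isNegativeDependency_neighborFinset {Ω V : Type*} [MeasurableSpace Ω] {μ : Measure Ω}
    {A : V → Set Ω} {G : SimpleGraph V} [Fintype V] [DecidableRel G.Adj]
    (hndg : ∀ (i : V) (S : Finset V), i ∉ S → (∀ j ∈ S, ¬ G.Adj i j) →
      0 < μ (⋂ j ∈ S, (A j)ᶜ) →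
      (μ (A i ∩ ⋂ j ∈ S, (A j)ᶜ)).toReal / (μ (⋂ j ∈ S, (A j)ᶜ)).toReal
        ≤ (μ (A i)).toReal) :
    IsNegativeDependency μ A fun i ↦ G.neighborFinset i := by
  intro i S hiS hdisj hpos
  have hnonadj : ∀ j ∈ S, ¬ G.Adj i j := fun j hj hadj ↦
    disjoint_left.mp hdisj hj ((G.mem_neighborFinset i j).mpr hadj)
  exact (div_le_iff₀ hpos).mp (hndg i S hiS hnonadj (ENNReal.toReal_pos_iff.mp hpos).1)

/-- **Lovász Local Lemma** (general / lopsided version).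
If `G` is a negative dependency graph for events `A 1, …, A n` (expressed by the
hypothesis `hndg`, using conditional probabilities `P(A i | ⋂_{j ∈ S} (A j)ᶜ) ≤ P(A i)`
for `S` consisting of non-neighbors of `i`), and `x i ∈ [0,1)` satisfy
`P(A i) ≤ x i * ∏_{j ∈ J i} (1 - x j)`, then
`P(⋂ i, (A i)ᶜ) ≥ ∏ i, (1 - x i) > 0`. -/
theorem lovasz_local_lemma {Ω : Type*} [MeasurableSpace Ω] (μ : Measure Ω)
    [IsProbabilityMeasure μ] {n : ℕ} (A : Fin n → Set Ω)
    (hA : ∀ i, MeasurableSet (A i))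
    (G : SimpleGraph (Fin n)) [DecidableRel G.Adj]
    (hndg : ∀ (i : Fin n) (S : Finset (Fin n)), i ∉ S → (∀ j ∈ S, ¬ G.Adj i j) →
      0 < μ (⋂ j ∈ S, (A j)ᶜ) →
      (μ (A i ∩ ⋂ j ∈ S, (A j)ᶜ)).toReal / (μ (⋂ j ∈ S, (A j)ᶜ)).toReal
        ≤ (μ (A i)).toReal)
    (x : Fin n → ℝ) (hx : ∀ i, x i ∈ Set.Ico (0 : ℝ) 1)
    (hP : ∀ i, (μ (A i)).toReal ≤ x i * ∏ j ∈ G.neighborFinset i, (1 - x j)) :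
    ∏ i, (1 - x i) ≤ (μ (⋂ i, (A i)ᶜ)).toReal ∧ 0 < ∏ i, (1 - x i) := by
  have hall := prod_one_sub_le_measureReal_avoidSet hA (isNegativeDependency_neighborFinset hndg)
    hx hP univ
  rw [avoidSet_univ] at hall
  exact ⟨hall, prod_pos fun i _ ↦ sub_pos.mpr (hx i).2⟩
end

section
/- Let A_1, ..., A_n be events in a probability space and let G be a negative dependency graph for these events in which every vertex has degree at most d. If p ∈ [0,1) satisfies P(A_i) ≤ p for all i ∈ [n] and e·p·(d+1) ≤ 1 (where e is Euler's number), then P(∩_{i=1}^n A_i^c) > 0. -/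
open MeasureTheory Finset

/-- Corollary of the Lovász Local Lemma: if `G` is a negative dependency graph for the
events `A 1, …, A n`, every vertex of `G` has degree at most `d`, `P(A i) ≤ p < 1` for
all `i`, and `e * p * (d + 1) ≤ 1`, then `P(⋂ i, (A i)ᶜ) > 0`. -/
theorem lovasz_local_lemma_symmetric {Ω : Type*} [MeasurableSpace Ω] (μ : Measure Ω)
    [IsProbabilityMeasure μ] {n : ℕ} (A : Fin n → Set Ω)
    (hA : ∀ i, MeasurableSet (A i))
    (G : SimpleGraph (Fin n)) [DecidableRel G.Adj]
    (hndg : ∀ (i : Fin n) (S : Finset (Fin n)), i ∉ S → (∀ j ∈ S, ¬ G.Adj i j) →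
      0 < μ (⋂ j ∈ S, (A j)ᶜ) →
      (μ (A i ∩ ⋂ j ∈ S, (A j)ᶜ)).toReal / (μ (⋂ j ∈ S, (A j)ᶜ)).toReal
        ≤ (μ (A i)).toReal)
    (d : ℕ) (hdeg : ∀ i, G.degree i ≤ d)
    (p : ℝ) (hp : p ∈ Set.Ico (0 : ℝ) 1)
    (hPi : ∀ i, (μ (A i)).toReal ≤ p)
    (hep : Real.exp 1 * p * (d + 1) ≤ 1) :
    0 < μ (⋂ i, (A i)ᶜ) := by
  classical
  obtain ⟨hp0, hp1⟩ := hp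
  have hdnn : (0:ℝ) ≤ (d:ℝ) := Nat.cast_nonneg d
  set x : ℝ := 1 / ((d:ℝ) + 2) with hxdef
  have hx0 : 0 < x := by positivity
  have hx1' : x < 1 := by
    rw [hxdef, div_lt_one (by linarith)]; linarith
  have h1x0 : (0:ℝ) < 1 - x := by linarith
  -- key numeric inequality : p ≤ x * (1 - x)^d
  have hm : (0:ℝ) < (d:ℝ) + 1 := by positivity
  have h1x : 1 - x = ((d:ℝ) + 1) / ((d:ℝ) + 2) := by
    rw [hxdef]; field_simp; ring
  have h2 : Real.exp (-(1/((d:ℝ)+1))) ≤ 1 - x := by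
    have hexp : ((d:ℝ)+2) / ((d:ℝ)+1) ≤ Real.exp (1/((d:ℝ)+1)) := by
      have := Real.add_one_le_exp (1/((d:ℝ)+1))
      calc ((d:ℝ)+2) / ((d:ℝ)+1) = 1/((d:ℝ)+1) + 1 := by field_simp; ring
        _ ≤ _ := this
    have hpos : (0:ℝ) < ((d:ℝ)+2) / ((d:ℝ)+1) := by positivity
    calc Real.exp (-(1/((d:ℝ)+1))) = (Real.exp (1/((d:ℝ)+1)))⁻¹ := by
          rw [Real.exp_neg]
      _ ≤ (((d:ℝ)+2) / ((d:ℝ)+1))⁻¹ := inv_anti₀ hpos hexp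
      _ = 1 - x := by rw [h1x]; rw [inv_div]
  have h3 : Real.exp (-1) ≤ (1 - x) ^ (d + 1) := by
    calc Real.exp (-1) = Real.exp (-(1/((d:ℝ)+1))) ^ (d + 1) := by
          rw [← Real.exp_nat_mul]; congr 1; push_cast; field_simp
      _ ≤ (1 - x) ^ (d + 1) := pow_le_pow_left₀ (Real.exp_pos _).le h2 _
  have h4 : x * (1 - x) ^ d = (1 - x) ^ (d + 1) / ((d:ℝ) + 1) := by
    rw [pow_succ]
    rw [h1x, hxdef]
    field_simp
  have h5 : p ≤ Real.exp (-1) / ((d:ℝ) + 1) := by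
    have he1 : (0:ℝ) < Real.exp 1 := Real.exp_pos 1
    rw [Real.exp_neg, le_div_iff₀ hm, inv_eq_one_div, le_div_iff₀ he1]
    nlinarith [hep]
  have hpx : p ≤ x * (1 - x) ^ d := by
    calc p ≤ Real.exp (-1) / ((d:ℝ) + 1) := h5
      _ ≤ (1 - x) ^ (d + 1) / ((d:ℝ) + 1) := by gcongr
      _ = x * (1 - x) ^ d := h4.symm
  -- abbreviations
  set f : Finset (Fin n) → ℝ := fun S => (μ (⋂ j ∈ S, (A j)ᶜ)).toReal with hfdef
  set g : Fin n → Finset (Fin n) → ℝ := fun i S => (μ (A i ∩ ⋂ j ∈ S, (A j)ᶜ)).toReal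
    with hgdef
  have hsplit : ∀ (i : Fin n) (S : Finset (Fin n)), g i S + f (insert i S) = f S := by
    intro i S
    have h2 : μ ((⋂ j ∈ S, (A j)ᶜ) ∩ A i) + μ ((⋂ j ∈ S, (A j)ᶜ) \ A i)
        = μ (⋂ j ∈ S, (A j)ᶜ) := measure_inter_add_diff _ (hA i)
    have e1 : (⋂ j ∈ S, (A j)ᶜ) ∩ A i = A i ∩ ⋂ j ∈ S, (A j)ᶜ := Set.inter_comm _ _
    have e2 : (⋂ j ∈ S, (A j)ᶜ) \ A i = ⋂ j ∈ insert i S, (A j)ᶜ := by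
      rw [Finset.set_biInter_insert, Set.diff_eq, Set.inter_comm]
    rw [e1, e2] at h2
    have := congrArg ENNReal.toReal h2
    rwa [ENNReal.toReal_add (measure_ne_top μ _) (measure_ne_top μ _)] at this
  -- main claim by strong induction on S
  have main : ∀ S : Finset (Fin n), 0 < f S ∧ ∀ i ∉ S, g i S ≤ x * f S := by
    intro S
    induction S using Finset.strongInductionOn with
    | _ S IH =>
    have hfSpos : 0 < f S := by
      rcases S.eq_empty_or_nonempty with rfl | ⟨j, hj⟩
      · simp only [hfdef]
        simp
      · obtain ⟨S', hj', rfl⟩ : ∃ S', j ∉ S' ∧ S = insert j S' :=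
          ⟨S.erase j, S.notMem_erase j, (Finset.insert_erase hj).symm⟩
        obtain ⟨hf', hg'⟩ := IH S' (Finset.ssubset_insert hj')
        have hsp := hsplit j S'
        have hgj := hg' j hj'
        nlinarith [mul_pos h1x0 hf']
    refine ⟨hfSpos, ?_⟩
    intro i hi
    set S1 := S.filter (fun j => G.Adj i j) with hS1
    set S2 := S.filter (fun j => ¬ G.Adj i j) with hS2
    have hS12 : S2 ∪ S1 = S := by
      rw [Finset.union_comm]; exact Finset.filter_union_filter_not_eq _ S
    -- peeling lemma
    have peel : ∀ T : Finset (Fin n), T ⊆ S1 → (1-x) ^ T.card * f S2 ≤ f (S2 ∪ T) := by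
      intro T
      induction T using Finset.induction_on with
      | empty => intro _; simp
      | @insert a T ha ihT =>
        intro hTs
        have haS1 : a ∈ S1 := hTs (Finset.mem_insert_self a T)
        have hT1 : T ⊆ S1 := (Finset.insert_subset_iff.mp hTs).2
        have ih' := ihT hT1
        have haS2 : a ∉ S2 := fun h =>
          (Finset.mem_filter.mp h).2 ((Finset.mem_filter.mp haS1).2)
        have haT : a ∉ S2 ∪ T := fun h => (Finset.mem_union.mp h).elim haS2 ha
        have hUS : S2 ∪ T ⊆ S := Finset.union_subset (Finset.filter_subset _ _)
          (hT1.trans (Finset.filter_subset _ _))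
        have haS : a ∈ S := (Finset.filter_subset _ _) haS1
        have hss : S2 ∪ T ⊂ S := (Finset.ssubset_iff_of_subset hUS).mpr ⟨a, haS, haT⟩
        obtain ⟨hfU, hgU⟩ := IH _ hss
        have hsp := hsplit a (S2 ∪ T)
        have hga := hgU a haT
        have hU : S2 ∪ insert a T = insert a (S2 ∪ T) := by
          ext b; simp only [Finset.mem_union, Finset.mem_insert]; tauto
        rw [hU, Finset.card_insert_of_notMem ha]
        calc (1-x) ^ (T.card + 1) * f S2 = (1-x) * ((1-x) ^ T.card * f S2) := by ring
          _ ≤ (1-x) * f (S2 ∪ T) := mul_le_mul_of_nonneg_left ih' h1x0.le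
          _ ≤ f (S2 ∪ T) - g a (S2 ∪ T) := by nlinarith [hga]
          _ = f (insert a (S2 ∪ T)) := by linarith [hsp]
    have hpeel : (1-x) ^ S1.card * f S2 ≤ f S := by
      have := peel S1 Finset.Subset.rfl
      rwa [hS12] at this
    -- positivity of f S2
    have hfS2 : 0 < f S2 := by
      by_cases hS2S : S2 = S
      · rw [hS2S]; exact hfSpos
      · exact (IH S2 (lt_of_le_of_ne (Finset.filter_subset _ _) hS2S)).1
    -- apply the negative dependency hypothesis
    have hi2 : i ∉ S2 := fun h => hi (Finset.filter_subset _ _ h)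
    have hadj2 : ∀ j ∈ S2, ¬ G.Adj i j := fun j hj => (Finset.mem_filter.mp hj).2
    have hμS2 : 0 < μ (⋂ j ∈ S2, (A j)ᶜ) := by
      have := hfS2
      simp only [hfdef] at this
      exact (ENNReal.toReal_pos_iff.mp this).1
    have hcond := hndg i S2 hi2 hadj2 hμS2
    have hgi2 : g i S2 ≤ p * f S2 := by
      have h := hcond.trans (hPi i)
      have hf2 : (0:ℝ) < (μ (⋂ j ∈ S2, (A j)ᶜ)).toReal := by
        simpa only [hfdef] using hfS2
      rw [div_le_iff₀ hf2] at h
      simpa only [hfdef, hgdef] using h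
    -- monotonicity
    have hgmono : g i S ≤ g i S2 := by
      simp only [hgdef]
      refine ENNReal.toReal_mono (measure_ne_top μ _) (measure_mono ?_)
      refine Set.inter_subset_inter_right _ ?_
      intro ω hω
      simp only [Set.mem_iInter] at hω ⊢
      exact fun j hj => hω j (Finset.filter_subset _ _ hj)
    -- S1 is small
    have hS1d : S1.card ≤ d := by
      have hsub : S1 ⊆ G.neighborFinset i := by
        intro j hj
        rw [SimpleGraph.mem_neighborFinset]
        exact (Finset.mem_filter.mp hj).2
      exact le_trans (Finset.card_le_card hsub) (hdeg i)
    have hpow : (1-x) ^ d ≤ (1-x) ^ S1.card :=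
      pow_le_pow_of_le_one h1x0.le (by linarith) hS1d
    calc g i S ≤ g i S2 := hgmono
      _ ≤ p * f S2 := hgi2
      _ ≤ (x * (1-x) ^ d) * f S2 := mul_le_mul_of_nonneg_right hpx hfS2.le
      _ = x * ((1-x) ^ d * f S2) := by ring
      _ ≤ x * ((1-x) ^ S1.card * f S2) :=
          mul_le_mul_of_nonneg_left (mul_le_mul_of_nonneg_right hpow hfS2.le) hx0.le
      _ ≤ x * f S := mul_le_mul_of_nonneg_left hpeel hx0.le
  -- conclude
  obtain ⟨hfu, -⟩ := main Finset.univ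
  have huniv : (⋂ j ∈ (Finset.univ : Finset (Fin n)), (A j)ᶜ) = ⋂ i, (A i)ᶜ := by
    simp
  simp only [hfdef, huniv] at hfu
  exact (ENNReal.toReal_pos_iff.mp hfu).1
end

section
/- Let A_1, ..., A_n be events in a probability space, let G be a negative dependency graph for these events, and suppose x_1, ..., x_n ∈ [0,1) satisfy P(A_i) ≤ x_i · ∏_{j ∈ J_i} (1 - x_j) for every i ∈ [n]. Then for every proper subset S of [n] with P(∩_{j∈S} A_j^c) > 0 and every i ∉ S, one has P(A_i | ∩_{j∈S} A_j^c) ≤ x_i. -/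
/-!
Write `B_S = ⋂_{j ∈ S} A_jᶜ`. Cleared of its denominator, the claim `P(A_i ∩ B_S) ≤ x_i P(B_S)`
holds for every `S ∌ i` with no positivity assumption, and is proved by strong induction on `S`.
Split `S` into the neighbours `N` and the non-neighbours `R` of `i`. Negative dependence gives
`P(A_i ∩ B_S) ≤ P(A_i ∩ B_R) ≤ P(A_i) P(B_R)`, and adding the events of `N` to `R` one at a time,
each step controlled by the induction hypothesis, gives `∏_{j ∈ N} (1 - x_j) P(B_R) ≤ P(B_S)`.
-/

open MeasureTheory Finset

section

variable {Ω ι : Type*} [MeasurableSpace Ω] {μ : Measure Ω} [IsFiniteMeasure μ] {A : ι → Set Ω}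

lemma measureReal_inter_le_mul_of_div_le {B C : Set Ω}
    (h : 0 < μ C → μ.real (B ∩ C) / μ.real C ≤ μ.real B) :
    μ.real (B ∩ C) ≤ μ.real B * μ.real C := by
  rcases (zero_le : 0 ≤ μ C).eq_or_lt with hC | hC
  · simp [measureReal_def, ← hC, measure_mono_null Set.inter_subset_right hC.symm]
  · exact (div_le_iff₀ (ENNReal.toReal_pos hC.ne' (measure_ne_top μ C))).mp (h hC)

variable [DecidableEq ι]

lemma one_sub_mul_measureReal_biInter_compl_le {k : ι} (hk : MeasurableSet (A k))
    {T : Finset ι} {p : ℝ}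
    (h : μ.real (A k ∩ ⋂ j ∈ T, (A j)ᶜ) ≤ p * μ.real (⋂ j ∈ T, (A j)ᶜ)) :
    (1 - p) * μ.real (⋂ j ∈ T, (A j)ᶜ) ≤ μ.real (⋂ j ∈ insert k T, (A j)ᶜ) := by
  have hsplit := measureReal_inter_add_sdiff (μ := μ) (s := ⋂ j ∈ T, (A j)ᶜ) hk
  rw [Set.inter_comm] at hsplit
  rw [set_biInter_insert, Set.inter_comm, ← Set.sdiff_eq]
  linarith

lemma prod_one_sub_mul_measureReal_biInter_compl_le (hA : ∀ i, MeasurableSet (A i))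
    {x : ι → ℝ} (T U : Finset ι) (hx : ∀ j ∈ U, x j ≤ 1)
    (h : ∀ k ∈ U, ∀ V ⊆ U, k ∉ V →
      μ.real (A k ∩ ⋂ j ∈ T ∪ V, (A j)ᶜ) ≤ x k * μ.real (⋂ j ∈ T ∪ V, (A j)ᶜ)) :
    (∏ j ∈ U, (1 - x j)) * μ.real (⋂ j ∈ T, (A j)ᶜ) ≤ μ.real (⋂ j ∈ T ∪ U, (A j)ᶜ) := by
  induction U using Finset.induction_on with
  | empty => simp
  | insert k U hkU ih =>
    have ih' := ih (fun j hj => hx j (mem_insert_of_mem hj))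
      fun l hl V hV hlV => h l (mem_insert_of_mem hl) V (hV.trans (subset_insert _ _)) hlV
    rw [prod_insert hkU, mul_assoc, union_insert]
    calc (1 - x k) * ((∏ j ∈ U, (1 - x j)) * μ.real (⋂ j ∈ T, (A j)ᶜ))
        ≤ (1 - x k) * μ.real (⋂ j ∈ T ∪ U, (A j)ᶜ) :=
          mul_le_mul_of_nonneg_left ih' (sub_nonneg.2 (hx k (mem_insert_self k U)))
      _ ≤ μ.real (⋂ j ∈ insert k (T ∪ U), (A j)ᶜ) :=
          one_sub_mul_measureReal_biInter_compl_le (hA k)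
            (h k (mem_insert_self k U) U (subset_insert k U) hkU)

theorem measureReal_inter_biInter_compl_le_mul [Fintype ι] (hA : ∀ i, MeasurableSet (A i))
    (G : SimpleGraph ι) [DecidableRel G.Adj]
    (hndg : ∀ i (S : Finset ι), i ∉ S → (∀ j ∈ S, ¬ G.Adj i j) →
      μ.real (A i ∩ ⋂ j ∈ S, (A j)ᶜ) ≤ μ.real (A i) * μ.real (⋂ j ∈ S, (A j)ᶜ))
    {x : ι → ℝ} (hx : ∀ i, x i ∈ Set.Ico (0 : ℝ) 1)
    (hP : ∀ i, μ.real (A i) ≤ x i * ∏ j ∈ G.neighborFinset i, (1 - x j))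
    (S : Finset ι) {i : ι} (hi : i ∉ S) :
    μ.real (A i ∩ ⋂ j ∈ S, (A j)ᶜ) ≤ x i * μ.real (⋂ j ∈ S, (A j)ᶜ) := by
  induction S using Finset.strongInduction generalizing i with
  | H S ih =>
  set N := S.filter (G.Adj i)
  set R := S.filter (fun j => ¬ G.Adj i j)
  have hRN : R ∪ N = S := by rw [union_comm]; exact filter_union_filter_not_eq _ _
  have hneighbours : ∏ j ∈ G.neighborFinset i, (1 - x j) ≤ ∏ j ∈ N, (1 - x j) :=
    prod_le_prod_of_subset_of_le_one
      (fun j hj => (G.mem_neighborFinset i j).2 (mem_filter.1 hj).2)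
      (fun j _ => sub_nonneg.2 (hx j).2.le) (fun j _ _ => sub_le_self _ (hx j).1)
  have hdenominator :
      (∏ j ∈ N, (1 - x j)) * μ.real (⋂ j ∈ R, (A j)ᶜ) ≤ μ.real (⋂ j ∈ S, (A j)ᶜ) := by
    conv_rhs => rw [← hRN]
    refine prod_one_sub_mul_measureReal_biInter_compl_le hA R N (fun j _ => (hx j).2.le)
      fun k hk V hV hkV => ?_
    have hkRV : k ∉ R ∪ V := by simp [R, hkV, (mem_filter.1 hk).2]
    exact ih _ ((ssubset_iff_of_subset (hRN ▸ union_subset_union_right hV)).2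
      ⟨k, (mem_filter.1 hk).1, hkRV⟩) hkRV
  have hRS : (R : Set ι) ⊆ S := coe_subset.2 (filter_subset _ _)
  calc μ.real (A i ∩ ⋂ j ∈ S, (A j)ᶜ)
      ≤ μ.real (A i ∩ ⋂ j ∈ R, (A j)ᶜ) :=
        measureReal_mono (Set.inter_subset_inter_right _ (Set.biInter_subset_biInter_left hRS))
    _ ≤ μ.real (A i) * μ.real (⋂ j ∈ R, (A j)ᶜ) :=
        hndg i R (fun h => hi (mem_filter.1 h).1) fun j hj => (mem_filter.1 hj).2
    _ ≤ x i * (∏ j ∈ N, (1 - x j)) * μ.real (⋂ j ∈ R, (A j)ᶜ) := by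
        gcongr
        exact (hP i).trans (mul_le_mul_of_nonneg_left hneighbours (hx i).1)
    _ ≤ x i * μ.real (⋂ j ∈ S, (A j)ᶜ) := by
        rw [mul_assoc]
        exact mul_le_mul_of_nonneg_left hdenominator (hx i).1

end

/-- The key claim in the proof of the Lovász Local Lemma: under the hypotheses of the
lemma, for every proper subset `S` of `[n]` with `P(⋂_{j ∈ S} (A j)ᶜ) > 0` and every
`i ∉ S`, one has `P(A i | ⋂_{j ∈ S} (A j)ᶜ) ≤ x i`. -/
theorem lovasz_local_lemma_claim {Ω : Type*} [MeasurableSpace Ω] (μ : Measure Ω)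
    [IsProbabilityMeasure μ] {n : ℕ} (A : Fin n → Set Ω)
    (hA : ∀ i, MeasurableSet (A i))
    (G : SimpleGraph (Fin n)) [DecidableRel G.Adj]
    (hndg : ∀ (i : Fin n) (S : Finset (Fin n)), i ∉ S → (∀ j ∈ S, ¬ G.Adj i j) →
      0 < μ (⋂ j ∈ S, (A j)ᶜ) →
      (μ (A i ∩ ⋂ j ∈ S, (A j)ᶜ)).toReal / (μ (⋂ j ∈ S, (A j)ᶜ)).toReal
        ≤ (μ (A i)).toReal)
    (x : Fin n → ℝ) (hx : ∀ i, x i ∈ Set.Ico (0 : ℝ) 1)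
    (hP : ∀ i, (μ (A i)).toReal ≤ x i * ∏ j ∈ G.neighborFinset i, (1 - x j)) :
    ∀ S : Finset (Fin n), S ≠ Finset.univ → 0 < μ (⋂ j ∈ S, (A j)ᶜ) →
      ∀ i ∉ S,
        (μ (A i ∩ ⋂ j ∈ S, (A j)ᶜ)).toReal / (μ (⋂ j ∈ S, (A j)ᶜ)).toReal ≤ x i := by
  intro S _ hS i hi
  rw [div_le_iff₀ (ENNReal.toReal_pos hS.ne' (measure_ne_top μ _))]
  exact measureReal_inter_biInter_compl_le_mul hA G
    (fun i S hi hS => measureReal_inter_le_mul_of_div_le (hndg i S hi hS)) hx hP S hi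
end

section
/- Let A_1, ..., A_n be canonical events in the uniform probability space Ω = I(U,V) of injections from a finite set U to a finite set V with |U| ≤ |V|, say A_i = A_{S_i, T_i, f_i} for matchings (S_i, T_i, f_i). Let G be the graph on [n] whose edges are exactly the pairs {i,j} such that the matchings (S_i, T_i, f_i) and (S_j, T_j, f_j) conflict. Then G is a negative dependency graph for A_1, ..., A_n. -/
/-!
Reveal the pairs `(a, f a)` of the matching of `A i` one at a time. Among the injections agreeing
with `f` on the pairs revealed so far, those that also send `a` to `f a`, post-composed with the
transposition `(f a, w)` for each still free value `w`, give every such injection exactly once.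
If no matching of an `A j`, `j ∈ S`, conflicts with that of `A i`, these transpositions keep an
injection outside every `A j`. So revealing a pair can only lower the conditional probability
of `⋂ j ∈ S, (A j)ᶜ`; once all pairs are revealed, `P(⋂ (A j)ᶜ | A i) ≤ P(⋂ (A j)ᶜ)`, which is
the claim by Bayes' rule.
-/

/-- A matching between `U` and `V`: a pair of subsets `S ⊆ U`, `T ⊆ V` together with a
bijection `f : S → T`. -/
structure Matching (U V : Type*) where
  S : Set U
  T : Set V
  f : S ≃ T

/-- The canonical event associated to a matching `(S, T, f)`: the set of injections
`σ : U → V` extending `f`. -/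
def canonicalEvent {U V : Type*} (M : Matching U V) :
    Set {σ : U → V // Function.Injective σ} :=
  {σ | ∀ k : M.S, σ.1 k = M.f k}

/-- Two matchings conflict if they disagree at some common point of their domains, or
their inverses disagree at some common point of their ranges. -/
def Matching.Conflict {U V : Type*} (M₁ M₂ : Matching U V) : Prop :=
  (∃ (k : U) (h₁ : k ∈ M₁.S) (h₂ : k ∈ M₂.S), (M₁.f ⟨k, h₁⟩ : V) ≠ (M₂.f ⟨k, h₂⟩ : V)) ∨
  (∃ (k : V) (h₁ : k ∈ M₁.T) (h₂ : k ∈ M₂.T),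
    (M₁.f.symm ⟨k, h₁⟩ : U) ≠ (M₂.f.symm ⟨k, h₂⟩ : U))

/-- The probability of an event `E` under the uniform probability measure on `Ω`. -/
noncomputable def unifProb {Ω : Type*} (E : Set Ω) : ℝ :=
  (Nat.card E : ℝ) / (Nat.card Ω : ℝ)

open Function Set

theorem ncard_inter_mul_ncard_le_of_bijOn {α β : Type*} [Finite α] {φ : α × β → α}
    {E' E B : Set α} {W : Set β} (hφ : BijOn φ (E' ×ˢ W) E) (hB : MapsTo φ ((E' ∩ B) ×ˢ W) B) :
    (E' ∩ B).ncard * E.ncard ≤ E'.ncard * (E ∩ B).ncard := by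
  have hE : E.ncard = E'.ncard * W.ncard := by rw [← hφ.ncard_eq, ncard_prod]
  have hEB : (E' ∩ B).ncard * W.ncard ≤ (E ∩ B).ncard := by
    rw [← ncard_prod]
    exact ncard_le_ncard_of_injOn φ (fun p hp => ⟨hφ.mapsTo ⟨hp.1.1, hp.2⟩, hB hp⟩)
      (hφ.injOn.mono (prod_mono inter_subset_left subset_rfl))
  calc (E' ∩ B).ncard * E.ncard = E'.ncard * ((E' ∩ B).ncard * W.ncard) := by rw [hE]; ring
    _ ≤ E'.ncard * (E ∩ B).ncard := Nat.mul_le_mul_left _ hEB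

section Injections

variable {U V : Type*}

local notation "Ω" => {σ : U → V // Function.Injective σ}

def swapValues [DecidableEq V] (v w : V) (σ : Ω) : Ω :=
  ⟨Equiv.swap v w ∘ σ.1, (Equiv.swap v w).injective.comp σ.2⟩

namespace Matching

variable {M N : Matching U V}

theorem apply_eq_of_not_conflict (h : ¬ M.Conflict N) {a : M.S} {b : N.S} (hab : (a : U) = b) :
    (M.f a : V) = N.f b := by
  by_contra hne
  obtain ⟨a, ha⟩ := a
  obtain ⟨b, hb⟩ := b
  subst hab
  exact h (Or.inl ⟨a, ha, hb, hne⟩)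

theorem eq_of_apply_eq_of_not_conflict (h : ¬ M.Conflict N) {a : M.S} {b : N.S}
    (hab : (M.f a : V) = N.f b) : (a : U) = b := by
  by_contra hne
  have hM : M.f.symm ⟨M.f a, (M.f a).2⟩ = a := by simp
  have hN : N.f.symm ⟨M.f a, hab ▸ (N.f b).2⟩ = b := by
    rw [Equiv.symm_apply_eq]; exact Subtype.ext hab
  exact h (Or.inr ⟨M.f a, (M.f a).2, hab ▸ (N.f b).2, by rw [hM, hN]; exact hne⟩)

theorem mem_canonicalEvent_of_swapValues_mem [DecidableEq V] (h : ¬ M.Conflict N) (a : M.S)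
    {σ : Ω} (hσ : σ.1 a = M.f a) (w : V) (hmem : swapValues (M.f a : V) w σ ∈ canonicalEvent N) :
    σ ∈ canonicalEvent N := by
  intro k
  have hk : Equiv.swap (M.f a : V) w (σ.1 k) = N.f k := hmem k
  by_cases hkv : σ.1 k = M.f a
  · rw [hkv]
    exact apply_eq_of_not_conflict h (σ.2 (hσ.trans hkv.symm))
  by_cases hkw : σ.1 k = w
  · rw [hkw, Equiv.swap_apply_right] at hk
    exact absurd (by rw [← eq_of_apply_eq_of_not_conflict h hk, hσ]) hkv
  · rwa [Equiv.swap_apply_of_ne_of_ne hkv hkw] at hk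

theorem swapValues_mem_iInter_compl [DecidableEq V] {ι : Type*} {N : ι → Matching U V}
    {S : Finset ι} (h : ∀ j ∈ S, ¬ M.Conflict (N j)) (a : M.S) {σ : Ω}
    (hσB : σ ∈ ⋂ j ∈ S, (canonicalEvent (N j))ᶜ) (hσ : σ.1 a = M.f a) (w : V) :
    swapValues (M.f a : V) w σ ∈ ⋂ j ∈ S, (canonicalEvent (N j))ᶜ := by
  simp only [mem_iInter, mem_compl_iff] at hσB ⊢
  exact fun j hj hmem => hσB j hj (mem_canonicalEvent_of_swapValues_mem (h j hj) a hσ w hmem)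

def eventOn (M : Matching U V) (s : Finset M.S) : Set Ω :=
  {σ | ∀ k ∈ s, σ.1 k = M.f k}

theorem eventOn_empty (M : Matching U V) : M.eventOn ∅ = univ := by
  simp [eventOn]

theorem eventOn_univ (M : Matching U V) [Fintype M.S] :
    M.eventOn Finset.univ = canonicalEvent M := by
  simp [eventOn, canonicalEvent]

theorem bijOn_swapValues [DecidableEq U] [DecidableEq V] (M : Matching U V) {a : M.S}
    {s : Finset M.S} (ha : a ∉ s) :
    BijOn (fun p : Ω × V => swapValues (M.f a : V) p.2 p.1)
      (M.eventOn (insert a s) ×ˢ {w : V | ∀ k ∈ s, w ≠ M.f k}) (M.eventOn s) := by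
  have hne : ∀ k ∈ s, (k : U) ≠ a := fun k hk he => ha (Subtype.ext he ▸ hk)
  have hfree : ∀ k ∈ s, (M.f k : V) ≠ M.f a := fun k hk he =>
    hne k hk (congrArg Subtype.val (M.f.injective (Subtype.ext he)))
  refine ⟨?maps, ?inj, ?surj⟩
  · rintro ⟨σ, w⟩ ⟨hσ, hw⟩ k hk
    simp only [swapValues, comp_apply]
    rw [hσ k (Finset.mem_insert_of_mem hk),
      Equiv.swap_apply_of_ne_of_ne (hfree k hk) (hw k hk).symm]
  · rintro ⟨σ, w⟩ ⟨hσ, -⟩ ⟨σ', w'⟩ ⟨hσ', -⟩ he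
    have hval := congrArg Subtype.val he
    have hσa : σ.1 a = M.f a := hσ a (Finset.mem_insert_self a s)
    have hσ'a : σ'.1 a = M.f a := hσ' a (Finset.mem_insert_self a s)
    have hw : w = w' := by simpa [swapValues, hσa, hσ'a] using congrFun hval a
    subst hw
    exact Prod.ext (Subtype.ext ((Equiv.swap _ w).injective.comp_left hval)) rfl
  · intro τ hτ
    have hτa : ∀ k ∈ s, τ.1 a ≠ τ.1 k := fun k hk he => hne k hk (τ.2 he).symm
    refine ⟨(swapValues (M.f a : V) (τ.1 a) τ, τ.1 a), ⟨fun k hk => ?_, fun k hk => ?_⟩, ?_⟩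
    · rcases Finset.mem_insert.1 hk with rfl | hk
      · simp [swapValues]
      · simp only [swapValues, comp_apply]
        rw [Equiv.swap_apply_of_ne_of_ne (hτ k hk ▸ hfree k hk) (hτa k hk).symm, hτ k hk]
    · exact hτ k hk ▸ hτa k hk
    · exact Subtype.ext (funext fun x => by simp [swapValues])

theorem ncard_eventOn_inter_mul_le [Finite U] [Finite V] [DecidableEq V] (M : Matching U V)
    {B : Set Ω}
    (hB : ∀ (a : M.S) (σ : Ω), σ ∈ B → σ.1 a = M.f a → ∀ w, swapValues (M.f a : V) w σ ∈ B)
    (s : Finset M.S) :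
    (M.eventOn s ∩ B).ncard * Nat.card Ω ≤ (M.eventOn s).ncard * B.ncard := by
  classical
  induction s using Finset.induction_on with
  | empty => simp [eventOn_empty, mul_comm]
  | insert a s ha ih =>
    have step := ncard_inter_mul_ncard_le_of_bijOn (bijOn_swapValues M ha)
      (fun p hp => hB a p.1 hp.1.2 (hp.1.1 a (Finset.mem_insert_self a s)) p.2)
    rcases Nat.eq_zero_or_pos (M.eventOn s).ncard with h0 | hpos
    · have hsub : M.eventOn (insert a s) ∩ B ⊆ M.eventOn s :=
        fun σ hσ k hk => hσ.1 k (Finset.mem_insert_of_mem hk)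
      have hle := ncard_le_ncard hsub
      rw [h0, Nat.le_zero] at hle
      simp [hle]
    · refine Nat.le_of_mul_le_mul_right ?_ hpos
      calc (M.eventOn (insert a s) ∩ B).ncard * Nat.card Ω * (M.eventOn s).ncard
          = (M.eventOn (insert a s) ∩ B).ncard * (M.eventOn s).ncard * Nat.card Ω := by ring
        _ ≤ (M.eventOn (insert a s)).ncard * (M.eventOn s ∩ B).ncard * Nat.card Ω :=
          Nat.mul_le_mul_right _ step
        _ ≤ (M.eventOn (insert a s)).ncard * ((M.eventOn s).ncard * B.ncard) := by
          rw [mul_assoc]; exact Nat.mul_le_mul_left _ ih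
        _ = (M.eventOn (insert a s)).ncard * B.ncard * (M.eventOn s).ncard := by ring

end Matching

end Injections

theorem negativeDependencyGraph_of_conflict_general {U V : Type*} [Fintype U] [Fintype V]
    {n : ℕ} (M : Fin n → Matching U V)
    (A : Fin n → Set {σ : U → V // Function.Injective σ})
    (hA : ∀ i, A i = canonicalEvent (M i))
    (G : SimpleGraph (Fin n))
    (hG : ∀ i j, G.Adj i j ↔ (M i).Conflict (M j)) :
    ∀ (i : Fin n) (S : Finset (Fin n)), i ∉ S → (∀ j ∈ S, ¬ G.Adj i j) →
      0 < unifProb (⋂ j ∈ S, (A j)ᶜ) →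
      unifProb (A i ∩ ⋂ j ∈ S, (A j)ᶜ) / unifProb (⋂ j ∈ S, (A j)ᶜ)
        ≤ unifProb (A i) := by
  classical
  intro i S _ hadj hpos
  obtain rfl : A = fun i => canonicalEvent (M i) := funext hA
  have hconf : ∀ j ∈ S, ¬ (M i).Conflict (M j) := fun j hj => (hG i j).not.mp (hadj j hj)
  have key := (M i).ncard_eventOn_inter_mul_le
    (fun a _ hσB hσ w => Matching.swapValues_mem_iInter_compl hconf a hσB hσ w) Finset.univ
  rw [Matching.eventOn_univ] at key
  simp only [unifProb, Nat.card_coe_set_eq] at hpos ⊢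
  obtain ⟨hB, hΩ⟩ := (div_pos_iff.mp hpos).resolve_right fun h => (Nat.cast_nonneg _).not_gt h.1
  rw [div_div_div_cancel_right₀ hΩ.ne', div_le_div_iff₀ hB hΩ]
  exact_mod_cast key

/-- In the uniform probability space of injections from a finite set `U` to a finite set
`V` with `|U| ≤ |V|`, the graph on `[n]` whose edges are exactly the pairs `{i, j}` whose
associated matchings conflict is a negative dependency graph for the canonical events
`A i = A_{S i, T i, f i}`. -/
theorem negativeDependencyGraph_of_conflict {U V : Type*} [Fintype U] [Fintype V]
    (hUV : Fintype.card U ≤ Fintype.card V)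
    {n : ℕ} (M : Fin n → Matching U V)
    (A : Fin n → Set {σ : U → V // Function.Injective σ})
    (hA : ∀ i, A i = canonicalEvent (M i))
    (G : SimpleGraph (Fin n))
    (hG : ∀ i j, G.Adj i j ↔ (M i).Conflict (M j)) :
    ∀ (i : Fin n) (S : Finset (Fin n)), i ∉ S → (∀ j ∈ S, ¬ G.Adj i j) →
      0 < unifProb (⋂ j ∈ S, (A j)ᶜ) →
      unifProb (A i ∩ ⋂ j ∈ S, (A j)ᶜ) / unifProb (⋂ j ∈ S, (A j)ᶜ)
        ≤ unifProb (A i) :=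
  negativeDependencyGraph_of_conflict_general M A hA G hG
end

section
/- Let U and V be finite sets with |U| ≤ |V| and let (S_1,T_1,f_1) and (S_2,T_2,f_2) be two matchings. Then the canonical events A_{S_1,T_1,f_1} and A_{S_2,T_2,f_2} in Ω = I(U,V) are disjoint if and only if the matchings (S_1,T_1,f_1) and (S_2,T_2,f_2) conflict. -/
/-- Two canonical events in the space `Ω = I(U, V)` of injections from a finite set `U`
to a finite set `V` with `|U| ≤ |V|` are disjoint if and only if the corresponding
matchings conflict. -/
theorem canonicalEvent_disjoint_iff_conflict {U V : Type*} [Fintype U] [Fintype V]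
    (hUV : Fintype.card U ≤ Fintype.card V) (M₁ M₂ : Matching U V) :
    canonicalEvent M₁ ∩ canonicalEvent M₂ = ∅ ↔ M₁.Conflict M₂ := by
  classical
  constructor
  · intro h
    by_contra hc
    rw [Matching.Conflict, not_or] at hc
    obtain ⟨hc1, hc2⟩ := hc
    push_neg at hc1 hc2
    set A : Set U := M₁.S ∪ M₂.S with hA
    -- partial injection on A
    set g : A → V := fun x =>
      if h : (x : U) ∈ M₁.S then (M₁.f ⟨x, h⟩ : V) else (M₂.f ⟨x, x.2.resolve_left h⟩ : V)
      with hg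
    have hg1 : ∀ (x : U) (hx : x ∈ M₁.S), g ⟨x, Or.inl hx⟩ = (M₁.f ⟨x, hx⟩ : V) := by
      intro x hx; simp [hg, hx]
    have hg2 : ∀ (x : U) (hx : x ∈ M₂.S), g ⟨x, Or.inr hx⟩ = (M₂.f ⟨x, hx⟩ : V) := by
      intro x hx
      by_cases h1 : x ∈ M₁.S
      · simpa [hg, h1] using (hc1 x h1 hx)
      · simp [hg, h1]
    have hginj : Function.Injective g := by
      rintro ⟨a, ha⟩ ⟨b, hb⟩ hab
      have key : ∀ (x y : U) (hx : x ∈ M₁.S) (hy : y ∈ M₂.S),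
          (M₁.f ⟨x, hx⟩ : V) = (M₂.f ⟨y, hy⟩ : V) → x = y := by
        intro x y hx hy hxy
        have hT1 : (M₁.f ⟨x, hx⟩ : V) ∈ M₁.T := (M₁.f ⟨x, hx⟩).2
        have hT2 : (M₁.f ⟨x, hx⟩ : V) ∈ M₂.T := hxy ▸ (M₂.f ⟨y, hy⟩).2
        have h2 := hc2 _ hT1 hT2
        have e1 : M₁.f.symm ⟨(M₁.f ⟨x, hx⟩ : V), hT1⟩ = ⟨x, hx⟩ := by
          rw [show (⟨(M₁.f ⟨x, hx⟩ : V), hT1⟩ : M₁.T) = M₁.f ⟨x, hx⟩ from rfl]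
          exact M₁.f.symm_apply_apply _
        have e2 : M₂.f.symm ⟨(M₁.f ⟨x, hx⟩ : V), hT2⟩ = ⟨y, hy⟩ := by
          rw [show (⟨(M₁.f ⟨x, hx⟩ : V), hT2⟩ : M₂.T) = M₂.f ⟨y, hy⟩ from Subtype.ext hxy]
          exact M₂.f.symm_apply_apply _
        rw [e1, e2] at h2
        exact h2
      by_cases ha1 : a ∈ M₁.S <;> by_cases hb1 : b ∈ M₁.S
      · simp only [hg, ha1, hb1, dif_pos] at hab
        have := M₁.f.injective (Subtype.ext hab)
        have hab' : a = b := congrArg Subtype.val this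
        exact Subtype.ext hab'
      · have hb2 : b ∈ M₂.S := hb.resolve_left hb1
        simp only [hg, ha1, hb1, dif_pos, dif_neg, not_false_iff] at hab
        exact Subtype.ext (key a b ha1 hb2 hab)
      · have ha2 : a ∈ M₂.S := ha.resolve_left ha1
        simp only [hg, ha1, hb1, dif_pos, dif_neg, not_false_iff] at hab
        exact Subtype.ext ((key b a hb1 ha2 hab.symm).symm)
      · have ha2 : a ∈ M₂.S := ha.resolve_left ha1
        have hb2 : b ∈ M₂.S := hb.resolve_left hb1
        simp only [hg, ha1, hb1, dif_neg, not_false_iff] at hab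
        have := M₂.f.injective (Subtype.ext hab)
        have hab' : a = b := congrArg Subtype.val this
        exact Subtype.ext hab'
    -- extend to the complements
    have hcard : Fintype.card ↥(Aᶜ) ≤ Fintype.card ↥((Set.range g)ᶜ) := by
      rw [Fintype.card_compl_set, Fintype.card_compl_set,
        Set.card_range_of_injective hginj]
      exact Nat.sub_le_sub_right hUV _
    obtain ⟨e⟩ := Function.Embedding.nonempty_of_card_le hcard
    set σ : U → V := fun x => if h : x ∈ A then g ⟨x, h⟩ else (e ⟨x, h⟩ : V) with hσ
    have hσinj : Function.Injective σ := by
      intro a b hab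
      by_cases ha : a ∈ A <;> by_cases hb : b ∈ A <;>
        simp only [hσ, ha, hb, dif_pos, dif_neg, not_false_iff] at hab
      · exact congrArg Subtype.val (hginj (hab : g ⟨a, ha⟩ = g ⟨b, hb⟩))
      · exact absurd (hab ▸ Set.mem_range_self _ : (e ⟨b, hb⟩ : V) ∈ Set.range g)
          (e ⟨b, hb⟩).2
      · exact absurd (hab ▸ Set.mem_range_self _ : (e ⟨a, ha⟩ : V) ∈ Set.range g)
          (e ⟨a, ha⟩).2
      · exact congrArg Subtype.val (e.injective (Subtype.ext hab))
    have hmem : (⟨σ, hσinj⟩ : {σ : U → V // Function.Injective σ}) ∈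
        canonicalEvent M₁ ∩ canonicalEvent M₂ := by
      constructor
      · rintro ⟨k, hk⟩
        show σ k = _
        have : σ k = g ⟨k, Or.inl hk⟩ := by simp [hσ, Or.inl hk, hA]
        rw [this, hg1 k hk]
      · rintro ⟨k, hk⟩
        show σ k = _
        have : σ k = g ⟨k, Or.inr hk⟩ := by simp [hσ, Or.inr hk, hA]
        rw [this, hg2 k hk]
    rw [h] at hmem
    exact hmem
  · intro h
    rw [Set.eq_empty_iff_forall_notMem]
    rintro σ ⟨h1, h2⟩
    rcases h with ⟨k, hk1, hk2, hne⟩ | ⟨k, hk1, hk2, hne⟩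
    · exact hne ((h1 ⟨k, hk1⟩).symm.trans (h2 ⟨k, hk2⟩))
    · apply hne
      apply σ.2
      rw [h1 (M₁.f.symm ⟨k, hk1⟩), h2 (M₂.f.symm ⟨k, hk2⟩),
        M₁.f.apply_symm_apply, M₂.f.apply_symm_apply]
end

section
/- Let H be an r-uniform hypergraph on n vertices, where r divides n. If the degree of each vertex of H is at least (1 − 1/(e·(1+r)))·C(n−1, r−1), where e is Euler's number, then H has a perfect matching. -/
open Finset

namespace HPM
open scoped Classical
set_option linter.unusedSectionVars false

variable {β : Type*} [Fintype β] [DecidableEq β]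


def isPM (r : ℕ) (M : Finset (Finset β)) : Prop :=
  (∀ F ∈ M, F.card = r) ∧ (M : Set (Finset β)).PairwiseDisjoint id ∧ M.biUnion id = univ

noncomputable def MM (r : ℕ) (Γ : Finset (Finset β)) : Finset (Finset (Finset β)) :=
  univ.filter (fun M => isPM r M ∧ ∀ G ∈ Γ, G ∉ M)

noncomputable def MMS (r : ℕ) (S : Finset β) (Γ : Finset (Finset β)) :
    Finset (Finset (Finset β)) :=
  (MM r Γ).filter (fun M => S ∈ M)

lemma mem_MM {r : ℕ} {Γ : Finset (Finset β)} {M : Finset (Finset β)} :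
    M ∈ MM r Γ ↔ isPM r M ∧ ∀ G ∈ Γ, G ∉ M := by simp [MM]

lemma mem_MMS {r : ℕ} {S : Finset β} {Γ : Finset (Finset β)} {M : Finset (Finset β)} :
    M ∈ MMS r S Γ ↔ (isPM r M ∧ ∀ G ∈ Γ, G ∉ M) ∧ S ∈ M := by simp [MMS, mem_MM]

lemma isPM.disj {r : ℕ} {M : Finset (Finset β)} (h : isPM r M) {T₁ T₂ : Finset β}
    (h1 : T₁ ∈ M) (h2 : T₂ ∈ M) (hne : T₁ ≠ T₂) : Disjoint T₁ T₂ :=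
  h.2.1 h1 h2 hne

lemma isPM.exists_part {r : ℕ} {M : Finset (Finset β)} (h : isPM r M) (v : β) :
    ∃ T ∈ M, v ∈ T := by
  have : v ∈ M.biUnion id := h.2.2 ▸ Finset.mem_univ v
  simpa using this

lemma MM_card_eq_sum (r : ℕ) (v : β) (Γ : Finset (Finset β)) :
    (MM r Γ).card
      = ∑ S' ∈ (univ.powersetCard r).filter (fun S : Finset β => v ∈ S), (MMS r S' Γ).card := by
  rw [← Finset.card_biUnion]
  · congr 1
    ext M
    simp only [Finset.mem_biUnion, Finset.mem_filter, Finset.mem_powersetCard]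
    constructor
    · intro hM
      obtain ⟨T, hTM, hvT⟩ := (mem_MM.mp hM).1.exists_part v
      exact ⟨T, ⟨⟨Finset.subset_univ T, (mem_MM.mp hM).1.1 T hTM⟩, hvT⟩,
        mem_MMS.mpr ⟨mem_MM.mp hM, hTM⟩⟩
    · rintro ⟨T, _, hT⟩
      exact mem_MM.mpr (mem_MMS.mp hT).1
  · intro S' hS' S'' hS'' hne
    rw [Function.onFun, Finset.disjoint_left]
    intro M hM1 hM2
    rw [mem_MMS] at hM1 hM2
    have hd := hM1.1.1.disj hM1.2 hM2.2 hne
    simp only [Finset.mem_coe, Finset.mem_filter] at hS'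
    exact (Finset.disjoint_left.mp hd hS'.2) (by
      simp only [Finset.mem_coe, Finset.mem_filter] at hS''
      exact hS''.2)

lemma MM_erase (r : ℕ) {Γ : Finset (Finset β)} {G : Finset β} (hG : G ∈ Γ) :
    (MM r (Γ.erase G)).card = (MM r Γ).card + (MMS r G (Γ.erase G)).card := by
  have h1 : MM r Γ = (MM r (Γ.erase G)).filter (fun M => G ∉ M) := by
    ext M
    simp only [mem_MM, Finset.mem_filter, mem_MM]
    constructor
    · intro ⟨hpm, hav⟩
      exact ⟨⟨hpm, fun G' hG' => hav G' (Finset.mem_of_mem_erase hG')⟩, hav G hG⟩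
    · intro ⟨⟨hpm, hav⟩, hGn⟩
      refine ⟨hpm, fun G' hG' => ?_⟩
      by_cases hGG : G' = G
      · exact hGG ▸ hGn
      · exact hav G' (Finset.mem_erase.mpr ⟨hGG, hG'⟩)
  have key := Finset.card_filter_add_card_filter_not
    (s := MM r (Γ.erase G)) (p := fun M => G ∈ M)
  have h2 : MMS r G (Γ.erase G) = (MM r (Γ.erase G)).filter (fun M => G ∈ M) := rfl
  rw [h1, h2]
  omega



lemma exists_fg (Y Y' B A : Finset β) (hB : B ⊆ Y) (hA : A ⊆ Y')
    (h1 : Y.card = Y'.card) (h2 : B.card = A.card) :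
    ∃ f g : β → β, (Y.image f = Y') ∧ (B.image f = A) ∧ (∀ x ∈ Y, g (f x) = x) := by
  classical
  have hcard2 : (Y \ B).card = (Y' \ A).card := by
    rw [Finset.card_sdiff_of_subset hB, Finset.card_sdiff_of_subset hA, h1, h2]
  let e₁ : {x // x ∈ B} ≃ {x // x ∈ A} := Finset.equivOfCardEq h2
  let e₂ : {x // x ∈ Y \ B} ≃ {x // x ∈ Y' \ A} := Finset.equivOfCardEq hcard2
  set f : β → β := fun x =>
    if hx : x ∈ B then (e₁ ⟨x, hx⟩ : β) else
    if hx2 : x ∈ Y \ B then (e₂ ⟨x, hx2⟩ : β) else x with hfdef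
  set g : β → β := fun y =>
    if hy : y ∈ A then (e₁.symm ⟨y, hy⟩ : β) else
    if hy2 : y ∈ Y' \ A then (e₂.symm ⟨y, hy2⟩ : β) else y with hgdef
  have hfB : ∀ x (hx : x ∈ B), f x = (e₁ ⟨x, hx⟩ : β) := by
    intro x hx; simp only [hfdef, dif_pos hx]
  have hfY : ∀ x (hx : x ∈ Y \ B), f x = (e₂ ⟨x, hx⟩ : β) := by
    intro x hx
    have hxB : x ∉ B := (Finset.mem_sdiff.mp hx).2
    simp only [hfdef, dif_neg hxB, dif_pos hx]
  have hgf : ∀ x ∈ Y, g (f x) = x := by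
    intro x hx
    by_cases hxB : x ∈ B
    · rw [hfB x hxB]
      have hmem : ((e₁ ⟨x, hxB⟩ : {x // x ∈ A}) : β) ∈ A := (e₁ ⟨x, hxB⟩).2
      simp only [hgdef, dif_pos hmem]
      have : e₁.symm ⟨((e₁ ⟨x, hxB⟩ : {x // x ∈ A}) : β), hmem⟩ = ⟨x, hxB⟩ := by
        rw [Equiv.symm_apply_eq]
      rw [this]
    · have hxYB : x ∈ Y \ B := Finset.mem_sdiff.mpr ⟨hx, hxB⟩
      rw [hfY x hxYB]
      have hmem : ((e₂ ⟨x, hxYB⟩ : {x // x ∈ Y' \ A}) : β) ∈ Y' \ A := (e₂ ⟨x, hxYB⟩).2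
      have hnA : ((e₂ ⟨x, hxYB⟩ : {x // x ∈ Y' \ A}) : β) ∉ A := (Finset.mem_sdiff.mp hmem).2
      simp only [hgdef, dif_neg hnA, dif_pos hmem]
      have : e₂.symm ⟨((e₂ ⟨x, hxYB⟩ : {x // x ∈ Y' \ A}) : β), hmem⟩ = ⟨x, hxYB⟩ := by
        rw [Equiv.symm_apply_eq]
      rw [this]
  have hinj : Set.InjOn f Y := by
    intro a ha b hb hab
    have := hgf a ha
    rw [hab, hgf b hb] at this
    exact this.symm
  have hfYsub : Y.image f ⊆ Y' := by
    intro y hy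
    obtain ⟨x, hx, rfl⟩ := Finset.mem_image.mp hy
    by_cases hxB : x ∈ B
    · rw [hfB x hxB]; exact hA (e₁ ⟨x, hxB⟩).2
    · rw [hfY x (Finset.mem_sdiff.mpr ⟨hx, hxB⟩)]
      exact (Finset.mem_sdiff.mp (e₂ ⟨x, Finset.mem_sdiff.mpr ⟨hx, hxB⟩⟩).2).1
  have hfBsub : B.image f ⊆ A := by
    intro y hy
    obtain ⟨x, hx, rfl⟩ := Finset.mem_image.mp hy
    rw [hfB x hx]; exact (e₁ ⟨x, hx⟩).2
  refine ⟨f, g, ?_, ?_, hgf⟩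
  · apply Finset.eq_of_subset_of_card_le hfYsub
    rw [Finset.card_image_of_injOn hinj, h1]
  · apply Finset.eq_of_subset_of_card_le hfBsub
    rw [Finset.card_image_of_injOn (hinj.mono (by exact_mod_cast hB))]
    omega

def fgProp (S S' X : Finset β) (p : (β → β) × (β → β)) : Prop :=
  ((X \ S).image p.1 = X \ S') ∧ ((S' \ S).image p.1 = S \ S') ∧ ∀ x ∈ X \ S, p.2 (p.1 x) = x

noncomputable def FG (S S' X : Finset β) : (β → β) × (β → β) :=
  if h : ∃ p : (β → β) × (β → β), fgProp S S' X p then Classical.choose h else (id, id)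

lemma FG_spec {S S' X : Finset β} (h : ∃ p, fgProp S S' X p) : fgProp S S' X (FG S S' X) := by
  rw [FG, dif_pos h]; exact Classical.choose_spec h

lemma exists_fgProp {S S' X : Finset β} (hSX : S ⊆ X) (hS'X : S' ⊆ X)
    (hcard : S.card = S'.card) : ∃ p : (β → β) × (β → β), fgProp S S' X p := by
  obtain ⟨f, g, h1, h2, h3⟩ := exists_fg (X \ S) (X \ S') (S' \ S) (S \ S')
    (Finset.sdiff_subset_sdiff hS'X (Finset.Subset.refl S))
    (Finset.sdiff_subset_sdiff hSX (Finset.Subset.refl S'))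
    (by rw [Finset.card_sdiff_of_subset hSX, Finset.card_sdiff_of_subset hS'X, hcard])
    (by
      rw [Finset.card_sdiff_comm hcard.symm])
  exact ⟨(f, g), h1, h2, h3⟩

noncomputable def Phi (S S' : Finset β) (M : Finset (Finset β)) : Finset (Finset β) :=
  (M \ M.filter (fun T => ¬ Disjoint T S')) ∪
    insert S' (((M.filter (fun T => ¬ Disjoint T S')).erase S).image
      (Finset.image (FG S S' ((M.filter (fun T => ¬ Disjoint T S')).biUnion id)).1))

noncomputable def Psi (S S' : Finset β) (M' : Finset (Finset β)) : Finset (Finset β) :=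
  (M' \ M'.filter (fun T => ¬ Disjoint T S)) ∪
    insert S (((M'.filter (fun T => ¬ Disjoint T S)).erase S').image
      (Finset.image (FG S S' ((M'.filter (fun T => ¬ Disjoint T S)).biUnion id)).2))

lemma disjoint_image_of_injOn {f : β → β} {s t u : Finset β} (hinj : Set.InjOn f u)
    (hs : s ⊆ u) (ht : t ⊆ u) (hd : Disjoint s t) :
    Disjoint (s.image f) (t.image f) := by
  rw [Finset.disjoint_left]
  intro y hy1 hy2
  obtain ⟨a, ha, rfl⟩ := Finset.mem_image.mp hy1
  obtain ⟨b, hb, hba⟩ := Finset.mem_image.mp hy2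
  have : b = a := hinj (ht hb) (hs ha) hba
  exact Finset.disjoint_left.mp hd ha (this ▸ hb)

theorem step (r : ℕ) (hr : 1 ≤ r) (v : β) (S S' : Finset β)
    (hS : S.card = r) (hS' : S'.card = r) (hvS : v ∈ S) (hvS' : v ∈ S')
    (Γ : Finset (Finset β)) (hΓ : ∀ G ∈ Γ, Disjoint G S)
    (M : Finset (Finset β)) (hpm : isPM r M) (hav : ∀ G ∈ Γ, G ∉ M) (hSM : S ∈ M) :
    (isPM r (Phi S S' M) ∧ (∀ G ∈ Γ, G ∉ Phi S S' M) ∧ S' ∈ Phi S S' M)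
      ∧ Psi S S' (Phi S S' M) = M := by
  set P := M.filter (fun T => ¬ Disjoint T S') with hP
  set X := P.biUnion id with hX
  -- basic facts
  have hPM : P ⊆ M := Finset.filter_subset _ _
  have hSP : S ∈ P := by
    rw [hP, Finset.mem_filter]
    exact ⟨hSM, fun hd => Finset.disjoint_left.mp hd hvS hvS'⟩
  have hSX : S ⊆ X := Finset.subset_biUnion_of_mem id hSP
  have hS'X : S' ⊆ X := by
    intro w hw
    have : w ∈ M.biUnion id := hpm.2.2 ▸ Finset.mem_univ w
    obtain ⟨T, hTM, hwT⟩ := Finset.mem_biUnion.mp this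
    have hTP : T ∈ P := by
      rw [hP, Finset.mem_filter]
      exact ⟨hTM, fun hd => Finset.disjoint_left.mp hd hwT hw⟩
    exact Finset.mem_biUnion.mpr ⟨T, hTP, hwT⟩
  have hfg := FG_spec (exists_fgProp hSX hS'X (hS.trans hS'.symm))
  set f := (FG S S' X).1 with hf
  set g := (FG S S' X).2 with hg
  obtain ⟨hf1, hf2, hf3⟩ := hfg
  simp only [← hf, ← hg] at hf1 hf2 hf3
  have hinj : Set.InjOn f (X \ S : Finset β) := by
    intro a ha b hb hab
    have h1 := hf3 a ha
    rw [hab] at h1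
    rw [hf3 b hb] at h1
    exact h1.symm
  -- parts of P other than S sit inside X \ S
  have hsub : ∀ T ∈ P.erase S, T ⊆ X \ S := by
    intro T hT
    have hTS : T ≠ S := (Finset.mem_erase.mp hT).1
    have hTP : T ∈ P := (Finset.mem_erase.mp hT).2
    have hdisj : Disjoint T S := hpm.2.1 (hPM hTP) hSM (by exact_mod_cast hTS)
    intro w hw
    exact Finset.mem_sdiff.mpr ⟨Finset.mem_biUnion.mpr ⟨T, hTP, hw⟩,
      Finset.disjoint_left.mp hdisj hw⟩
  -- M \ P parts are disjoint from X
  have houtside : ∀ T ∈ M \ P, Disjoint T X := by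
    intro T hT
    rw [hX, Finset.disjoint_biUnion_right]
    intro T' hT'
    have hne : T ≠ T' := by
      rintro rfl
      exact (Finset.mem_sdiff.mp hT).2 hT'
    exact hpm.2.1 ((Finset.mem_sdiff.mp hT).1) (hPM hT') (by exact_mod_cast hne)
  -- union of P.erase S
  have herase_union : (P.erase S).biUnion id = X \ S := by
    apply Finset.Subset.antisymm
    · intro w hw
      obtain ⟨T, hT, hwT⟩ := Finset.mem_biUnion.mp hw
      exact hsub T hT hwT
    · intro w hw
      obtain ⟨hwX, hwS⟩ := Finset.mem_sdiff.mp hw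
      obtain ⟨T, hTP, hwT⟩ := Finset.mem_biUnion.mp hwX
      have hTS : T ≠ S := by rintro rfl; exact hwS hwT
      exact Finset.mem_biUnion.mpr ⟨T, Finset.mem_erase.mpr ⟨hTS, hTP⟩, hwT⟩
  have houter_union : (M \ P).biUnion id = univ \ X := by
    apply Finset.Subset.antisymm
    · intro w hw
      obtain ⟨T, hT, hwT⟩ := Finset.mem_biUnion.mp hw
      exact Finset.mem_sdiff.mpr ⟨Finset.mem_univ w,
        fun hwX => Finset.disjoint_left.mp (houtside T hT) hwT hwX⟩
    · intro w hw
      obtain ⟨_, hwX⟩ := Finset.mem_sdiff.mp hw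
      have : w ∈ M.biUnion id := hpm.2.2 ▸ Finset.mem_univ w
      obtain ⟨T, hTM, hwT⟩ := Finset.mem_biUnion.mp this
      have hTP : T ∉ P := fun hTP => hwX (Finset.mem_biUnion.mpr ⟨T, hTP, hwT⟩)
      exact Finset.mem_biUnion.mpr ⟨T, Finset.mem_sdiff.mpr ⟨hTM, hTP⟩, hwT⟩
  set Q := (P.erase S).image (Finset.image f) with hQ
  -- facts about Q elements
  have hQfact : ∀ q ∈ Q, q ⊆ X \ S' ∧ q.card = r ∧ ¬ Disjoint q S := by
    intro q hq
    obtain ⟨T, hT, rfl⟩ := Finset.mem_image.mp hq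
    have hTsub := hsub T hT
    have hTM : T ∈ M := hPM (Finset.mem_erase.mp hT).2
    refine ⟨?_, ?_, ?_⟩
    · intro y hy
      obtain ⟨a, ha, rfl⟩ := Finset.mem_image.mp hy
      exact hf1 ▸ Finset.mem_image.mpr ⟨a, hTsub ha, rfl⟩
    · rw [Finset.card_image_of_injOn (hinj.mono (by exact_mod_cast hTsub))]
      exact hpm.1 T hTM
    · -- T meets S' \ S, so image meets S \ S' ⊆ S
      have hTP : T ∈ P := (Finset.mem_erase.mp hT).2
      have : ¬ Disjoint T S' := (Finset.mem_filter.mp hTP).2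
      obtain ⟨w, hwT, hwS'⟩ := Finset.not_disjoint_iff.mp this
      have hwS : w ∉ S := (Finset.mem_sdiff.mp (hTsub hwT)).2
      have hwB : w ∈ S' \ S := Finset.mem_sdiff.mpr ⟨hwS', hwS⟩
      have hfw : f w ∈ S \ S' := hf2 ▸ Finset.mem_image.mpr ⟨w, hwB, rfl⟩
      exact Finset.not_disjoint_iff.mpr ⟨f w, Finset.mem_image.mpr ⟨w, hwT, rfl⟩,
        (Finset.mem_sdiff.mp hfw).1⟩
  have hQunion : Q.biUnion id = X \ S' := by
    rw [← hf1, ← herase_union]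
    apply Finset.Subset.antisymm
    · intro y hy
      obtain ⟨q, hq, hyq⟩ := Finset.mem_biUnion.mp hy
      obtain ⟨T, hT, rfl⟩ := Finset.mem_image.mp hq
      obtain ⟨a, ha, rfl⟩ := Finset.mem_image.mp hyq
      exact Finset.mem_image.mpr ⟨a, Finset.mem_biUnion.mpr ⟨T, hT, ha⟩, rfl⟩
    · intro y hy
      obtain ⟨a, ha, rfl⟩ := Finset.mem_image.mp hy
      obtain ⟨T, hT, haT⟩ := Finset.mem_biUnion.mp ha
      exact Finset.mem_biUnion.mpr ⟨T.image f, Finset.mem_image.mpr ⟨T, hT, rfl⟩,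
        Finset.mem_image.mpr ⟨a, haT, rfl⟩⟩
  have hPhi : Phi S S' M = (M \ P) ∪ insert S' Q := rfl
  have hS'ne : S'.Nonempty := Finset.card_pos.mp (by omega)
  have hSne : S.Nonempty := Finset.card_pos.mp (by omega)
  have hmemM' : ∀ F, F ∈ (M \ P) ∪ insert S' Q ↔ (F ∈ M \ P ∨ F = S' ∨ F ∈ Q) := by
    intro F
    simp only [Finset.mem_union, Finset.mem_insert]
  have hinsX : ∀ F ∈ insert S' Q, F ⊆ X := by
    intro F hF
    rcases Finset.mem_insert.mp hF with rfl | hFQ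
    · exact hS'X
    · exact (hQfact F hFQ).1.trans (Finset.sdiff_subset)
  have hinsNe : ∀ F ∈ insert S' Q, F.Nonempty := by
    intro F hF
    rcases Finset.mem_insert.mp hF with rfl | hFQ
    · exact hS'ne
    · exact Finset.card_pos.mp (by rw [(hQfact F hFQ).2.1]; omega)
  have hdisjMP : ∀ T ∈ M \ P, ∀ F ∈ insert S' Q, Disjoint T F := by
    intro T hT F hF
    exact (houtside T hT).mono_right (hinsX F hF)
  have hMPins : Disjoint (M \ P) (insert S' Q) := by
    rw [Finset.disjoint_left]
    intro T hT hT2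
    have h1 := hdisjMP T hT T hT2
    have h2 := hinsNe T hT2
    rw [disjoint_self] at h1
    exact h2.ne_empty (by exact_mod_cast h1)
  have hdisjQ : ∀ q₁ ∈ Q, ∀ q₂ ∈ Q, q₁ ≠ q₂ → Disjoint q₁ q₂ := by
    intro q₁ hq₁ q₂ hq₂ hne
    obtain ⟨T₁, hT₁, rfl⟩ := Finset.mem_image.mp hq₁
    obtain ⟨T₂, hT₂, rfl⟩ := Finset.mem_image.mp hq₂
    have hTne : T₁ ≠ T₂ := by rintro rfl; exact hne rfl
    have hd : Disjoint T₁ T₂ := hpm.2.1 (hPM (Finset.mem_erase.mp hT₁).2)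
      (hPM (Finset.mem_erase.mp hT₂).2) (by exact_mod_cast hTne)
    exact disjoint_image_of_injOn hinj (by exact_mod_cast hsub T₁ hT₁)
      (by exact_mod_cast hsub T₂ hT₂) hd
  have hdisjS'Q : ∀ q ∈ Q, Disjoint S' q := by
    intro q hq
    have := (hQfact q hq).1
    exact Finset.disjoint_sdiff.mono_right this
  have hpd : (((M \ P) ∪ insert S' Q : Finset (Finset β)) : Set (Finset β)).PairwiseDisjoint id := by
    intro a ha b hb hne
    have ha' := (hmemM' a).mp (by exact_mod_cast ha)
    have hb' := (hmemM' b).mp (by exact_mod_cast hb)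
    have hne' : a ≠ b := hne
    show Disjoint (id a) (id b)
    simp only [id]
    rcases ha' with ha1 | ha2 | ha3 <;> rcases hb' with hb1 | hb2 | hb3
    · exact hpm.2.1 (Finset.mem_sdiff.mp ha1).1 (Finset.mem_sdiff.mp hb1).1 (by exact_mod_cast hne')
    · exact hdisjMP a ha1 b (hb2 ▸ Finset.mem_insert_self S' Q)
    · exact hdisjMP a ha1 b (Finset.mem_insert.mpr (Or.inr hb3))
    · exact (hdisjMP b hb1 a (ha2 ▸ Finset.mem_insert_self S' Q)).symm
    · exact absurd (ha2.trans hb2.symm) hne'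
    · exact ha2 ▸ hdisjS'Q b hb3
    · exact (hdisjMP b hb1 a (Finset.mem_insert.mpr (Or.inr ha3))).symm
    · exact hb2 ▸ (hdisjS'Q a ha3).symm
    · exact hdisjQ a ha3 b hb3 hne'
  have hcover : ((M \ P) ∪ insert S' Q).biUnion id = univ := by
    have hbu : ((M \ P) ∪ insert S' Q).biUnion id
        = (M \ P).biUnion id ∪ (insert S' Q).biUnion id := by
      ext w
      simp only [Finset.mem_biUnion, Finset.mem_union]
      constructor
      · rintro ⟨T, (h | h), hw⟩
        · exact Or.inl ⟨T, h, hw⟩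
        · exact Or.inr ⟨T, h, hw⟩
      · rintro (⟨T, h, hw⟩ | ⟨T, h, hw⟩)
        · exact ⟨T, Or.inl h, hw⟩
        · exact ⟨T, Or.inr h, hw⟩
    rw [hbu, Finset.biUnion_insert, houter_union, hQunion]
    simp only [id]
    rw [Finset.union_sdiff_of_subset hS'X]
    rw [Finset.sdiff_union_of_subset (Finset.subset_univ X)]
  have hcards : ∀ F ∈ (M \ P) ∪ insert S' Q, F.card = r := by
    intro F hF
    rcases (hmemM' F).mp hF with h1 | h2 | h3
    · exact hpm.1 F (Finset.mem_sdiff.mp h1).1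
    · rw [h2]; exact hS'
    · exact (hQfact F h3).2.1
  have hPhiPM : isPM r (Phi S S' M) := by
    rw [hPhi]; exact ⟨hcards, hpd, hcover⟩
  have hPhiav : ∀ G ∈ Γ, G ∉ Phi S S' M := by
    intro G hG hGmem
    rw [hPhi] at hGmem
    rcases (hmemM' G).mp hGmem with h1 | h2 | h3
    · exact hav G hG (Finset.mem_sdiff.mp h1).1
    · exact Finset.disjoint_left.mp (hΓ G hG) (h2 ▸ hvS') hvS
    · exact (hQfact G h3).2.2 (hΓ G hG)
  have hPhiS' : S' ∈ Phi S S' M := by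
    rw [hPhi]; exact Finset.mem_union_right _ (Finset.mem_insert_self S' Q)
  refine ⟨⟨hPhiPM, hPhiav, hPhiS'⟩, ?_⟩
  -- reconstruction
  rw [hPhi]
  set M' := (M \ P) ∪ insert S' Q with hM'
  have hS'Q : S' ∉ Q := by
    intro hS'Q
    have := (hQfact S' hS'Q).1
    obtain ⟨w, hw⟩ := hS'ne
    exact (Finset.mem_sdiff.mp (this hw)).2 hw
  have hP'' : M'.filter (fun T => ¬ Disjoint T S) = insert S' Q := by
    ext T
    rw [Finset.mem_filter]
    constructor
    · rintro ⟨hTM', hTd⟩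
      rcases (hmemM' T).mp hTM' with h1 | h2 | h3
      · exact absurd ((houtside T h1).mono_right hSX) hTd
      · exact h2 ▸ Finset.mem_insert_self S' Q
      · exact Finset.mem_insert.mpr (Or.inr h3)
    · intro hT
      refine ⟨Finset.mem_union_right _ hT, ?_⟩
      rcases Finset.mem_insert.mp hT with rfl | hTQ
      · exact fun hd => Finset.disjoint_left.mp hd hvS' hvS
      · exact (hQfact T hTQ).2.2
  have hX'' : (M'.filter (fun T => ¬ Disjoint T S)).biUnion id = X := by
    rw [hP'', Finset.biUnion_insert]
    simp only [id]
    rw [hQunion, Finset.union_sdiff_of_subset hS'X]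
  have hPsi : Psi S S' M' = (M' \ M'.filter (fun T => ¬ Disjoint T S)) ∪
      insert S (((M'.filter (fun T => ¬ Disjoint T S)).erase S').image
        (Finset.image (FG S S' ((M'.filter (fun T => ¬ Disjoint T S)).biUnion id)).2)) := rfl
  rw [hPsi, hX'', hP'']
  rw [Finset.erase_insert hS'Q]
  have himg : Q.image (Finset.image (FG S S' X).2) = P.erase S := by
    rw [hQ, Finset.image_image]
    have : ∀ T ∈ P.erase S, (Finset.image (FG S S' X).2 ∘ Finset.image f) T = T := by
      intro T hT
      simp only [Function.comp_apply, Finset.image_image]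
      have : ∀ x ∈ T, ((FG S S' X).2 ∘ f) x = x := fun x hx => hf3 x (hsub T hT hx)
      rw [Finset.image_congr (fun x hx => this x hx), Finset.image_id']
    rw [Finset.image_congr (fun T hT => this T (by exact_mod_cast hT)), Finset.image_id']
  rw [himg]
  have hMP' : M' \ insert S' Q = M \ P := by
    rw [hM', Finset.union_sdiff_right]
    exact Finset.sdiff_eq_self_of_disjoint hMPins
  rw [hMP', Finset.insert_erase hSP]
  exact Finset.sdiff_union_of_subset hPM



lemma card_R (r : ℕ) (hr : 1 ≤ r) (v : β) :
    ((univ.powersetCard r).filter (fun S : Finset β => v ∈ S)).card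
      = (Fintype.card β - 1).choose (r - 1) := by
  have h : ((univ.powersetCard r).filter (fun S : Finset β => v ∈ S)).card
      = (((univ.erase v)).powersetCard (r - 1)).card := by
    apply Finset.card_bij' (fun S _ => S.erase v) (fun t _ => insert v t)
    · intro S hS
      simp only [Finset.mem_filter] at hS
      exact Finset.insert_erase hS.2
    · intro t ht
      rw [Finset.mem_powersetCard] at ht
      have hvt : v ∉ t := fun h => (Finset.mem_erase.mp (ht.1 h)).1 rfl
      exact Finset.erase_insert hvt
    · intro S hS
      simp only [Finset.mem_filter, Finset.mem_powersetCard] at hS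
      rw [Finset.mem_powersetCard]
      exact ⟨Finset.erase_subset_erase v (Finset.subset_univ S),
        by rw [Finset.card_erase_of_mem hS.2, hS.1.2]⟩
    · intro t ht
      rw [Finset.mem_powersetCard] at ht
      have hvt : v ∉ t := fun h => (Finset.mem_erase.mp (ht.1 h)).1 rfl
      simp only [Finset.mem_filter, Finset.mem_powersetCard]
      refine ⟨⟨Finset.subset_univ _, ?_⟩, Finset.mem_insert_self v t⟩
      rw [Finset.card_insert_of_notMem hvt, ht.2]
      omega
  rw [h, Finset.card_powersetCard, Finset.card_erase_of_mem (Finset.mem_univ v), Finset.card_univ]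

lemma exists_pm (r : ℕ) (hr : 1 ≤ r) :
    ∀ (U : Finset β), r ∣ U.card → ∃ M : Finset (Finset β),
      (∀ F ∈ M, F.card = r) ∧ (M : Set (Finset β)).PairwiseDisjoint id ∧ M.biUnion id = U := by
  intro U
  induction U using Finset.strongInduction with
  | _ U ih =>
    intro hdvd
    rcases Finset.eq_empty_or_nonempty U with hU | hU
    · exact ⟨∅, by simp, by simp, by simp [hU]⟩
    · have hrU : r ≤ U.card := Nat.le_of_dvd (Finset.card_pos.mpr hU) hdvd
      obtain ⟨T, hTU, hTcard⟩ := Finset.exists_subset_card_eq hrU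
      have hTne : T.Nonempty := Finset.card_pos.mp (by omega)
      have hlt : U \ T ⊂ U := Finset.sdiff_ssubset hTU hTne
      obtain ⟨M₀, h1, h2, h3⟩ := ih (U \ T) hlt (by
        rw [Finset.card_sdiff_of_subset hTU, hTcard]
        exact Nat.dvd_sub hdvd dvd_rfl)
      have hTnotin : ∀ F ∈ M₀, Disjoint T F := by
        intro F hF
        have : F ⊆ U \ T := h3 ▸ Finset.subset_biUnion_of_mem id hF
        exact (Finset.disjoint_sdiff.mono_right this)
      refine ⟨insert T M₀, ?_, ?_, ?_⟩
      · intro F hF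
        rcases Finset.mem_insert.mp hF with h | h
        · rw [h, hTcard]
        · exact h1 F h
      · rw [Finset.coe_insert]
        refine Set.PairwiseDisjoint.insert h2 ?_
        intro F hF _
        exact (hTnotin F hF)
      · rw [Finset.biUnion_insert]
        simp only [id]
        rw [h3]
        exact Finset.union_sdiff_of_subset hTU

lemma inj_lemma (r : ℕ) (hr : 1 ≤ r) (v : β) (S S' : Finset β)
    (hS : S.card = r) (hS' : S'.card = r) (hvS : v ∈ S) (hvS' : v ∈ S')
    (Γ : Finset (Finset β)) (hΓ : ∀ G ∈ Γ, Disjoint G S) :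
    (MMS r S Γ).card ≤ (MMS r S' Γ).card := by
  apply Finset.card_le_card_of_injOn (Phi S S')
  · intro M hM
    obtain ⟨⟨hpm, hav⟩, hSM⟩ := mem_MMS.mp hM
    obtain ⟨⟨h1, h2, h3⟩, _⟩ := step r hr v S S' hS hS' hvS hvS' Γ hΓ M hpm hav hSM
    exact mem_MMS.mpr ⟨⟨h1, h2⟩, h3⟩
  · intro M₁ h1 M₂ h2 heq
    obtain ⟨⟨hpm1, hav1⟩, hSM1⟩ := mem_MMS.mp (by exact_mod_cast h1)
    obtain ⟨⟨hpm2, hav2⟩, hSM2⟩ := mem_MMS.mp (by exact_mod_cast h2)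
    have e1 := (step r hr v S S' hS hS' hvS hvS' Γ hΓ M₁ hpm1 hav1 hSM1).2
    have e2 := (step r hr v S S' hS hS' hvS hvS' Γ hΓ M₂ hpm2 hav2 hSM2).2
    rw [← e1, ← e2, heq]

lemma lopsided (r : ℕ) (hr : 1 ≤ r) (v : β) (S : Finset β)
    (hS : S.card = r) (hvS : v ∈ S)
    (Γ : Finset (Finset β)) (hΓ : ∀ G ∈ Γ, Disjoint G S) :
    ((Fintype.card β - 1).choose (r - 1)) * (MMS r S Γ).card ≤ (MM r Γ).card := by
  rw [MM_card_eq_sum r v Γ, ← card_R r hr v]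
  rw [← Finset.sum_const_nat (m := (MMS r S Γ).card) (fun _ _ => rfl)]
  apply Finset.sum_le_sum
  intro S' hS'
  simp only [Finset.mem_filter, Finset.mem_powersetCard] at hS'
  exact inj_lemma r hr v S S' hS hS'.1.2 hvS hS'.2 Γ hΓ

section LLL

/-- The local lemma induction, counting form. -/
theorem key (r : ℕ) (N : Finset (Finset β)) (D : ℕ)
    (hr : 1 ≤ r) (hNr : ∀ T ∈ N, T.card = r) (hD : 2 ≤ D)
    (hnb : ∀ T ∈ N, (N.filter (fun G => ¬ Disjoint G T)).card ≤ D)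
    (hC : Real.exp 1 * D ≤ ((Fintype.card β - 1).choose (r - 1) : ℝ)) :
    ∀ (k : ℕ) (Γ : Finset (Finset β)), Γ.card ≤ k → Γ ⊆ N → ∀ T ∈ N, T ∉ Γ →
      ((MMS r T Γ).card : ℝ) ≤ (1 / D) * (MM r Γ).card := by
  set C : ℕ := (Fintype.card β - 1).choose (r - 1) with hCdef
  have hCpos : (0:ℝ) < C := lt_of_lt_of_le (by positivity) hC
  have hDpos : (0:ℝ) < D := by exact_mod_cast (by omega : 0 < D)
  set x : ℝ := 1 / (D:ℝ) with hxdef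
  have hxpos : 0 < x := by positivity
  have hxlt : x ≤ 1/2 := by
    rw [hxdef]
    rw [div_le_div_iff₀ hDpos (by norm_num)]
    have : (2:ℝ) ≤ D := by exact_mod_cast hD
    linarith
  have hexp : (1:ℝ) ≤ Real.exp 1 := by
    have := Real.add_one_le_exp (1:ℝ); linarith
  have hDC : (D:ℝ) ≤ C := by nlinarith
  have hxC : 1 ≤ x * C * (1-x)^(D-1) := by
    have hd1 : 1 ≤ D - 1 := by omega
    set d : ℕ := D - 1 with hd
    have hdd : (d:ℝ) = (D:ℝ) - 1 := by
      have hDd : (D:ℕ) = d + 1 := by omega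
      rw [hDd]; push_cast; ring
    have hdpos : (0:ℝ) < d := by
      have : 0 < d := by omega
      exact_mod_cast this
    have h1x : 1 - x = (d:ℝ)/D := by rw [hxdef, hdd]; field_simp
    have hpow : (1 + 1/(d:ℝ))^d ≤ Real.exp 1 := by
      have h1 : (1 + 1/(d:ℝ)) ≤ Real.exp (1/(d:ℝ)) := by
        have := Real.add_one_le_exp (1/(d:ℝ)); linarith
      have h2 : (1 + 1/(d:ℝ))^d ≤ (Real.exp (1/(d:ℝ)))^d :=
        pow_le_pow_left₀ (by positivity) h1 d
      rwa [← Real.exp_nat_mul, mul_one_div, div_self (by positivity : (d:ℝ) ≠ 0)] at h2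
    have honemul : (1-x)*(1+1/(d:ℝ)) = 1 := by
      rw [h1x]
      have hd1D : (d:ℝ)+1 = D := by rw [hdd]; ring
      field_simp
      nlinarith [hd1D]
    have h2 : (1-x)^d * (1+1/(d:ℝ))^d = 1 := by rw [← mul_pow, honemul, one_pow]
    have hppos : (0:ℝ) < (1+1/(d:ℝ))^d := by positivity
    have h3 : 1/Real.exp 1 ≤ (1-x)^d := by
      have heq : (1-x)^d = 1/(1+1/(d:ℝ))^d :=
        eq_one_div_of_mul_eq_one_left h2
      rw [heq]
      apply one_div_le_one_div_of_le hppos hpow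
    have hxCe : Real.exp 1 ≤ x * C := by
      have hxc : x * C = (C:ℝ)/D := by rw [hxdef]; ring
      rw [hxc, le_div_iff₀ hDpos]
      linarith
    calc (1:ℝ) = Real.exp 1 * (1/Real.exp 1) := by
            field_simp
      _ ≤ (x*C) * ((1-x)^d) := by
            apply mul_le_mul hxCe h3 (by positivity) (by positivity)
      _ = x*C*(1-x)^(D-1) := by rw [hd]
  intro k
  induction k with
  | zero =>
    intro Γ hcard hΓN T hTN hTΓ
    have hΓe : Γ = ∅ := Finset.card_eq_zero.mp (Nat.le_antisymm hcard (Nat.zero_le _))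
    subst hΓe
    have hTne : T.Nonempty := Finset.card_pos.mp (by rw [hNr T hTN]; omega)
    obtain ⟨v, hv⟩ := hTne
    have hlop := lopsided r hr v T (hNr T hTN) hv ∅ (by simp)
    have hlopR : (C:ℝ) * ((MMS r T (∅ : Finset (Finset β))).card : ℝ)
        ≤ ((MM r (∅ : Finset (Finset β))).card : ℝ) := by exact_mod_cast hlop
    have ha : (0:ℝ) ≤ ((MM r (∅ : Finset (Finset β))).card : ℝ) := Nat.cast_nonneg _
    rw [hxdef] at *
    rw [div_mul_eq_mul_div, one_mul, le_div_iff₀ hDpos]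
    nlinarith
  | succ k ih =>
    intro Γ hcard hΓN T hTN hTΓ
    -- peeling lemma
    have peel : ∀ (m : ℕ) (Δ : Finset (Finset β)), Δ ⊆ Γ → ∀ Γ₂ ⊆ Δ, (Δ \ Γ₂).card = m →
        (1-x)^m * ((MM r Γ₂).card:ℝ) ≤ ((MM r Δ).card:ℝ) := by
      intro m
      induction m with
      | zero =>
        intro Δ hΔΓ Γ₂ h2Δ hm
        have hΔ2 : Δ = Γ₂ := Finset.Subset.antisymm
          (Finset.sdiff_eq_empty_iff_subset.mp (Finset.card_eq_zero.mp hm)) h2Δ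
        rw [hΔ2, pow_zero, one_mul]
      | succ m ihm =>
        intro Δ hΔΓ Γ₂ h2Δ hm
        have hne : (Δ \ Γ₂).Nonempty := Finset.card_pos.mp (by omega)
        obtain ⟨G, hG⟩ := hne
        have hGΔ : G ∈ Δ := (Finset.mem_sdiff.mp hG).1
        have hGn2 : G ∉ Γ₂ := (Finset.mem_sdiff.mp hG).2
        have h2e : Γ₂ ⊆ Δ.erase G := Finset.subset_erase.mpr ⟨h2Δ, hGn2⟩
        have hmm : ((Δ.erase G) \ Γ₂).card = m := by
          have : (Δ.erase G) \ Γ₂ = (Δ \ Γ₂).erase G := by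
            ext F
            simp only [Finset.mem_sdiff, Finset.mem_erase]
            tauto
          rw [this, Finset.card_erase_of_mem hG, hm]
          omega
        have hIH := ihm (Δ.erase G) ((Finset.erase_subset G Δ).trans hΔΓ) Γ₂ h2e hmm
        have hkey := ih (Δ.erase G)
          (by
            have h1 : Δ.card ≤ k + 1 := le_trans (Finset.card_le_card hΔΓ) hcard
            have h2 := Finset.card_erase_of_mem hGΔ
            omega)
          (((Finset.erase_subset G Δ).trans hΔΓ).trans hΓN)
          G (hΓN (hΔΓ hGΔ)) (Finset.notMem_erase G Δ)
        have herase := MM_erase r (Γ := Δ) (G := G) hGΔ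
        have heraseR : ((MM r (Δ.erase G)).card : ℝ)
            = ((MM r Δ).card : ℝ) + ((MMS r G (Δ.erase G)).card : ℝ) := by
          exact_mod_cast herase
        have hstep : (1-x) * ((MM r (Δ.erase G)).card : ℝ) ≤ ((MM r Δ).card : ℝ) := by
          nlinarith [hkey, heraseR]
        calc (1-x)^(m+1) * ((MM r Γ₂).card:ℝ)
            = (1-x) * ((1-x)^m * ((MM r Γ₂).card:ℝ)) := by ring
          _ ≤ (1-x) * ((MM r (Δ.erase G)).card : ℝ) := by
              apply mul_le_mul_of_nonneg_left hIH (by linarith)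
          _ ≤ ((MM r Δ).card : ℝ) := hstep
    -- main argument
    have hTne : T.Nonempty := Finset.card_pos.mp (by rw [hNr T hTN]; omega)
    obtain ⟨v, hv⟩ := hTne
    set Γ₂ := Γ.filter (fun G => Disjoint G T) with hΓ₂def
    have hΓ₂Γ : Γ₂ ⊆ Γ := Finset.filter_subset _ _
    have hd2 : ∀ G ∈ Γ₂, Disjoint G T := fun G hG => (Finset.mem_filter.mp hG).2
    have hΓ1 : Γ \ Γ₂ = Γ.filter (fun G => ¬ Disjoint G T) := by
      ext F
      simp only [Finset.mem_sdiff, Finset.mem_filter, hΓ₂def]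
      tauto
    have hcard1 : (Γ \ Γ₂).card + 1 ≤ D := by
      have hTnotin : T ∉ Γ \ Γ₂ := fun h => hTΓ (Finset.mem_sdiff.mp h).1
      have hsub : insert T (Γ \ Γ₂) ⊆ N.filter (fun G => ¬ Disjoint G T) := by
        intro G hGmem
        rcases Finset.mem_insert.mp hGmem with rfl | hGmem'
        · exact Finset.mem_filter.mpr ⟨hTN,
            fun hd => Finset.disjoint_left.mp hd hv hv⟩
        · rw [hΓ1] at hGmem'
          exact Finset.mem_filter.mpr ⟨hΓN (Finset.mem_filter.mp hGmem').1,
            (Finset.mem_filter.mp hGmem').2⟩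
      have hle := le_trans (Finset.card_le_card hsub) (hnb T hTN)
      rwa [Finset.card_insert_of_notMem hTnotin] at hle
    have hpeel := peel (Γ \ Γ₂).card Γ (Finset.Subset.refl Γ) Γ₂ hΓ₂Γ rfl
    have hlop := lopsided r hr v T (hNr T hTN) hv Γ₂ hd2
    have hlopR : (C:ℝ) * ((MMS r T Γ₂).card:ℝ) ≤ ((MM r Γ₂).card:ℝ) := by
      exact_mod_cast hlop
    have hmono : ((MMS r T Γ).card:ℝ) ≤ ((MMS r T Γ₂).card:ℝ) := by
      have : MMS r T Γ ⊆ MMS r T Γ₂ := by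
        intro M hM
        obtain ⟨⟨hpm, hav⟩, hTM⟩ := mem_MMS.mp hM
        exact mem_MMS.mpr ⟨⟨hpm, fun G hG => hav G (hΓ₂Γ hG)⟩, hTM⟩
      exact_mod_cast Finset.card_le_card this
    have hpowmono : (1-x)^(D-1) ≤ (1-x)^((Γ \ Γ₂).card) := by
      apply pow_le_pow_of_le_one (by linarith) (by linarith)
      omega
    -- combine
    have hA2 : (0:ℝ) ≤ ((MM r Γ₂).card:ℝ) := Nat.cast_nonneg _
    have hs2 : (0:ℝ) ≤ ((MMS r T Γ₂).card:ℝ) := Nat.cast_nonneg _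
    have hq : (0:ℝ) < (1-x)^(D-1) := pow_pos (by linarith) _
    have hq1 : (0:ℝ) < (1-x)^((Γ \ Γ₂).card) := pow_pos (by linarith) _
    -- x * a(Γ) ≥ x * q1 * a(Γ₂) ≥ x * q * a(Γ₂) ≥ x*q*C*s2 ≥ s2 ≥ s
    have c1 : x * ((MM r Γ).card:ℝ) ≥ x * ((1-x)^((Γ \ Γ₂).card) * ((MM r Γ₂).card:ℝ)) :=
      mul_le_mul_of_nonneg_left hpeel (le_of_lt hxpos)
    have c2 : (1-x)^((Γ \ Γ₂).card) * ((MM r Γ₂).card:ℝ)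
        ≥ (1-x)^(D-1) * ((MM r Γ₂).card:ℝ) :=
      mul_le_mul_of_nonneg_right hpowmono hA2
    have c3 : (1-x)^(D-1) * ((MM r Γ₂).card:ℝ)
        ≥ (1-x)^(D-1) * ((C:ℝ) * ((MMS r T Γ₂).card:ℝ)) :=
      mul_le_mul_of_nonneg_left hlopR (le_of_lt hq)
    have c4 : x * ((1-x)^(D-1) * ((C:ℝ) * ((MMS r T Γ₂).card:ℝ)))
        = (x * (C:ℝ) * (1-x)^(D-1)) * ((MMS r T Γ₂).card:ℝ) := by ring
    have c5 : (x * (C:ℝ) * (1-x)^(D-1)) * ((MMS r T Γ₂).card:ℝ)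
        ≥ 1 * ((MMS r T Γ₂).card:ℝ) :=
      mul_le_mul_of_nonneg_right hxC hs2
    calc ((MMS r T Γ).card:ℝ) ≤ ((MMS r T Γ₂).card:ℝ) := hmono
      _ = 1 * ((MMS r T Γ₂).card:ℝ) := by ring
      _ ≤ (x * (C:ℝ) * (1-x)^(D-1)) * ((MMS r T Γ₂).card:ℝ) := c5
      _ = x * ((1-x)^(D-1) * ((C:ℝ) * ((MMS r T Γ₂).card:ℝ))) := by ring
      _ ≤ x * ((1-x)^(D-1) * ((MM r Γ₂).card:ℝ)) := by
          apply mul_le_mul_of_nonneg_left c3 (le_of_lt hxpos)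
      _ ≤ x * ((1-x)^((Γ \ Γ₂).card) * ((MM r Γ₂).card:ℝ)) := by
          apply mul_le_mul_of_nonneg_left c2 (le_of_lt hxpos)
      _ ≤ x * ((MM r Γ).card:ℝ) := c1

/-- Positivity of the avoiding count. -/
theorem MM_pos (r : ℕ) (N : Finset (Finset β)) (D : ℕ)
    (hr : 1 ≤ r) (hNr : ∀ T ∈ N, T.card = r) (hD : 2 ≤ D)
    (hnb : ∀ T ∈ N, (N.filter (fun G => ¬ Disjoint G T)).card ≤ D)
    (hC : Real.exp 1 * D ≤ ((Fintype.card β - 1).choose (r - 1) : ℝ))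
    (hdvd : r ∣ Fintype.card β) :
    0 < (MM r N).card := by
  have hkey := key r N D hr hNr hD hnb hC
  have hDpos : (0:ℝ) < D := by exact_mod_cast (by omega : 0 < D)
  set x : ℝ := 1 / (D:ℝ) with hxdef
  have hxpos : 0 < x := by positivity
  have hxlt : x ≤ 1/2 := by
    rw [hxdef, div_le_div_iff₀ hDpos (by norm_num)]
    have : (2:ℝ) ≤ D := by exact_mod_cast hD
    linarith
  -- peel everything
  have peel : ∀ (m : ℕ) (Δ : Finset (Finset β)), Δ ⊆ N → Δ.card = m →
      (1-x)^m * ((MM r (∅ : Finset (Finset β))).card:ℝ) ≤ ((MM r Δ).card:ℝ) := by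
    intro m
    induction m with
    | zero =>
      intro Δ hΔN hm
      have hΔe : Δ = ∅ := Finset.card_eq_zero.mp hm
      subst hΔe
      rw [pow_zero, one_mul]
    | succ m ihm =>
      intro Δ hΔN hm
      have hne : Δ.Nonempty := Finset.card_pos.mp (by omega)
      obtain ⟨G, hGΔ⟩ := hne
      have hIH := ihm (Δ.erase G) ((Finset.erase_subset G Δ).trans hΔN)
        (by rw [Finset.card_erase_of_mem hGΔ, hm]; omega)
      have hkey2 := hkey (Δ.erase G).card (Δ.erase G) (le_refl _)
        (((Finset.erase_subset G Δ).trans hΔN)) G (hΔN hGΔ) (Finset.notMem_erase G Δ)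
      have herase := MM_erase r (Γ := Δ) (G := G) hGΔ
      have heraseR : ((MM r (Δ.erase G)).card : ℝ)
          = ((MM r Δ).card : ℝ) + ((MMS r G (Δ.erase G)).card : ℝ) := by
        exact_mod_cast herase
      have hstep : (1-x) * ((MM r (Δ.erase G)).card : ℝ) ≤ ((MM r Δ).card : ℝ) := by
        nlinarith [hkey2, heraseR]
      calc (1-x)^(m+1) * ((MM r (∅ : Finset (Finset β))).card:ℝ)
          = (1-x) * ((1-x)^m * ((MM r (∅ : Finset (Finset β))).card:ℝ)) := by ring
        _ ≤ (1-x) * ((MM r (Δ.erase G)).card : ℝ) := by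
            apply mul_le_mul_of_nonneg_left hIH (by linarith)
        _ ≤ ((MM r Δ).card : ℝ) := hstep
  have hempty : 0 < (MM r (∅ : Finset (Finset β))).card := by
    obtain ⟨M, h1, h2, h3⟩ := exists_pm r hr (univ : Finset β) (by
      rwa [Finset.card_univ])

    apply Finset.card_pos.mpr
    exact ⟨M, mem_MM.mpr ⟨⟨h1, h2, h3⟩, by simp⟩⟩
  have hfin := peel N.card N (Finset.Subset.refl N) rfl
  have : (0:ℝ) < (1-x)^N.card * ((MM r (∅ : Finset (Finset β))).card:ℝ) := by
    apply mul_pos (pow_pos (by linarith) _)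
    exact_mod_cast hempty
  have : (0:ℝ) < ((MM r N).card:ℝ) := lt_of_lt_of_le this hfin
  exact_mod_cast this

end LLL

end HPM

open HPM in
/-- If `r ∣ n` and every vertex of an `r`-uniform hypergraph `H` on `n` vertices (vertex
type `β`, edge set `E_H`) has degree at least `(1 - 1/(e*(1+r))) * C(n-1, r-1)`, then `H`
has a perfect matching: a collection of pairwise disjoint edges whose union is the vertex
set. -/
theorem hypergraph_perfect_matching {β : Type*} [Fintype β] [DecidableEq β] (r n : ℕ)
    (hn : Fintype.card β = n) (hrn : r ∣ n)
    (E_H : Finset (Finset β)) (hr : ∀ F ∈ E_H, F.card = r)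
    (hdeg : ∀ v : β,
      (1 - 1 / (Real.exp 1 * (1 + (r : ℝ)))) * ((n - 1).choose (r - 1) : ℝ)
        ≤ ((E_H.filter fun F => v ∈ F).card : ℝ)) :
    ∃ M ⊆ E_H, (∀ F₁ ∈ M, ∀ F₂ ∈ M, F₁ ≠ F₂ → Disjoint F₁ F₂) ∧
      M.biUnion id = Finset.univ := by
  classical
  subst hn
  by_cases hn0 : Fintype.card β = 0
  · have huniv : (univ : Finset β) = ∅ := by
      rw [← Finset.card_eq_zero, Finset.card_univ]; exact hn0
    exact ⟨∅, Finset.empty_subset _, fun F₁ h _ _ _ => absurd h (Finset.notMem_empty _),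
      by simp [huniv]⟩
  have hnpos : 0 < Fintype.card β := Nat.pos_of_ne_zero hn0
  have hr1 : 1 ≤ r := by
    rcases Nat.eq_zero_or_pos r with h | h
    · subst h; rw [Nat.zero_dvd] at hrn; omega
    · exact h
  have hrle : r ≤ Fintype.card β := Nat.le_of_dvd hnpos hrn
  set C : ℕ := (Fintype.card β - 1).choose (r - 1) with hCdef
  have hCpos : 0 < C := Nat.choose_pos (by omega)
  set ε : ℝ := 1 / (Real.exp 1 * (1 + (r:ℝ))) with hεdef
  have hexp1 : (2:ℝ) ≤ Real.exp 1 := by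
    have := Real.add_one_le_exp (1:ℝ); linarith
  have hεpos : 0 < ε := by
    rw [hεdef]; positivity
  set N : Finset (Finset β) := (univ.powersetCard r).filter (fun S => S ∉ E_H) with hNdef
  have hNr : ∀ T ∈ N, T.card = r := by
    intro T hT
    rw [hNdef, Finset.mem_filter, Finset.mem_powersetCard] at hT
    exact hT.1.2
  -- the degree complement bound
  have hb : ∀ v : β, ((N.filter (fun S => v ∈ S)).card : ℝ) ≤ ε * C := by
    intro v
    set R : Finset (Finset β) := (univ.powersetCard r).filter (fun S : Finset β => v ∈ S)
      with hRdef
    have hRC : R.card = C := card_R r hr1 v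
    have h1 : N.filter (fun S => v ∈ S) = R.filter (fun S => S ∉ E_H) := by
      rw [hNdef, hRdef]
      rw [Finset.filter_filter, Finset.filter_filter]
      apply Finset.filter_congr
      intro S _
      constructor
      · rintro ⟨h1, h2⟩; exact ⟨h2, h1⟩
      · rintro ⟨h1, h2⟩; exact ⟨h2, h1⟩
    have h2 : E_H.filter (fun S => v ∈ S) = R.filter (fun S => S ∈ E_H) := by
      rw [hRdef]
      ext F
      simp only [Finset.mem_filter, Finset.mem_powersetCard]
      constructor
      · rintro ⟨hF, hv⟩
        exact ⟨⟨⟨Finset.subset_univ F, hr F hF⟩, hv⟩, hF⟩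
      · rintro ⟨⟨_, hv⟩, hF⟩
        exact ⟨hF, hv⟩
    have h3 := Finset.card_filter_add_card_filter_not
      (s := R) (p := fun S => S ∈ E_H)
    have h4 : (R.filter (fun S => S ∈ E_H)).card + (R.filter (fun S => S ∉ E_H)).card
        = C := by rw [← hRC]; exact_mod_cast h3
    have hdg := hdeg v
    rw [h2] at hdg
    rw [h1]
    have hε1 : ε * C = C - (1 - ε) * C := by ring
    have hcast : ((R.filter (fun S => S ∈ E_H)).card : ℝ)
        + ((R.filter (fun S => S ∉ E_H)).card : ℝ) = (C:ℝ) := by exact_mod_cast h4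
    rw [hε1]
    linarith
  rcases Finset.eq_empty_or_nonempty N with hNe | hNne
  · -- no missing edges: any partition works
    obtain ⟨M, h1, h2, h3⟩ := exists_pm r hr1 (univ : Finset β)
      (by rwa [Finset.card_univ])
    refine ⟨M, ?_, ?_, h3⟩
    · intro F hF
      by_contra hFE
      have : F ∈ N := by
        rw [hNdef, Finset.mem_filter, Finset.mem_powersetCard]
        exact ⟨⟨Finset.subset_univ F, h1 F hF⟩, hFE⟩
      rw [hNe] at this
      exact Finset.notMem_empty _ this
    · intro F₁ hF₁ F₂ hF₂ hne
      exact h2 hF₁ hF₂ hne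
  · -- the local lemma branch
    set B₀ : ℕ := Nat.floor (ε * C) with hB₀def
    have hbB : ∀ v : β, (N.filter (fun S => v ∈ S)).card ≤ B₀ := by
      intro v
      exact Nat.le_floor (hb v)
    obtain ⟨T₀, hT₀⟩ := hNne
    have hT₀ne : T₀.Nonempty := Finset.card_pos.mp (by rw [hNr T₀ hT₀]; omega)
    obtain ⟨v₀, hv₀⟩ := hT₀ne
    have hB₀pos : 1 ≤ B₀ := by
      have : T₀ ∈ N.filter (fun S => v₀ ∈ S) := Finset.mem_filter.mpr ⟨hT₀, hv₀⟩
      have hc : 1 ≤ (N.filter (fun S => v₀ ∈ S)).card :=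
        Finset.card_pos.mpr ⟨T₀, this⟩
      exact le_trans hc (hbB v₀)
    have hr2 : 2 ≤ r := by
      by_contra hlt
      have hre : r = 1 := by omega
      subst hre
      have hC1 : C = 1 := by rw [hCdef]; simp
      have hbv := hb v₀
      rw [hC1] at hbv
      push_cast at hbv
      have hb1 : (1:ℝ) ≤ ((N.filter (fun S => v₀ ∈ S)).card : ℝ) := by
        have hmm : T₀ ∈ N.filter (fun S => v₀ ∈ S) := Finset.mem_filter.mpr ⟨hT₀, hv₀⟩
        exact_mod_cast Finset.card_pos.mpr ⟨T₀, hmm⟩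
      have h4 : (4:ℝ) ≤ Real.exp 1 * (1+((1:ℕ):ℝ)) := by
        push_cast
        nlinarith
      have hεle : ε ≤ 1/4 := by
        rw [hεdef]
        exact one_div_le_one_div_of_le (by norm_num) h4
      linarith
    set D : ℕ := r * B₀ with hDdef
    have hD2 : 2 ≤ D := by
      rw [hDdef]
      nlinarith
    have hnb : ∀ T ∈ N, (N.filter (fun G => ¬ Disjoint G T)).card ≤ D := by
      intro T hT
      have hsub : N.filter (fun G => ¬ Disjoint G T)
          ⊆ T.biUnion (fun v => N.filter (fun S => v ∈ S)) := by
        intro G hG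
        rw [Finset.mem_filter] at hG
        obtain ⟨w, hwG, hwT⟩ := Finset.not_disjoint_iff.mp hG.2
        exact Finset.mem_biUnion.mpr ⟨w, hwT, Finset.mem_filter.mpr ⟨hG.1, hwG⟩⟩
      calc (N.filter (fun G => ¬ Disjoint G T)).card
          ≤ (T.biUnion (fun v => N.filter (fun S => v ∈ S))).card :=
            Finset.card_le_card hsub
        _ ≤ ∑ v ∈ T, (N.filter (fun S => v ∈ S)).card := Finset.card_biUnion_le
        _ ≤ ∑ v ∈ T, B₀ := Finset.sum_le_sum (fun v _ => hbB v)
        _ = r * B₀ := by rw [Finset.sum_const, hNr T hT, smul_eq_mul]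
    have hC : Real.exp 1 * D ≤ (C:ℝ) := by
      have hfloor : (B₀:ℝ) ≤ ε * C := Nat.floor_le (by positivity)
      have h1 : (D:ℝ) = (r:ℝ) * B₀ := by rw [hDdef]; push_cast; ring
      have h2 : Real.exp 1 * D ≤ Real.exp 1 * ((r:ℝ) * (ε * C)) := by
        rw [h1]
        apply mul_le_mul_of_nonneg_left _ (by positivity)
        apply mul_le_mul_of_nonneg_left hfloor (by positivity)
      have h3 : Real.exp 1 * ((r:ℝ) * (ε * C)) = (r:ℝ)/(1+(r:ℝ)) * C := by
        rw [hεdef]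
        field_simp
      have h4 : (r:ℝ)/(1+(r:ℝ)) * C ≤ 1 * C := by
        apply mul_le_mul_of_nonneg_right _ (by positivity)
        rw [div_le_one (by positivity)]
        linarith
      linarith
    have hpos := MM_pos r N D hr1 hNr hD2 hnb hC hrn
    obtain ⟨M, hM⟩ := Finset.card_pos.mp hpos
    obtain ⟨⟨hcards, hdisj, hcover⟩, havoid⟩ := mem_MM.mp hM
    refine ⟨M, ?_, ?_, hcover⟩
    · intro F hF
      by_contra hFE
      have : F ∈ N := by
        rw [hNdef, Finset.mem_filter, Finset.mem_powersetCard]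
        exact ⟨⟨Finset.subset_univ F, hcards F hF⟩, hFE⟩
      exact havoid F this hF
    · intro F₁ hF₁ F₂ hF₂ hne
      exact hdisj hF₁ hF₂ hne
end

section
/- Let A = (a_{i,j}) be an n × n matrix and let k be a positive integer with k ≤ (n−1)/(4e), where e is Euler's number. If no value appears in more than k entries of A, then A has a Latin transversal. -/
open Finset

namespace LatinAux

def Events {α : Type*} [DecidableEq α] {n : ℕ} (A : Fin n → Fin n → α) :
    Finset ((Fin n × Fin n) × (Fin n × Fin n)) :=
  univ.filter fun e => e.1.1 < e.2.1 ∧ e.1.2 ≠ e.2.2 ∧ A e.1.1 e.1.2 = A e.2.1 e.2.2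


def hits {n : ℕ} (π : Equiv.Perm (Fin n)) (e : (Fin n × Fin n) × (Fin n × Fin n)) : Prop :=
  π e.1.1 = e.1.2 ∧ π e.2.1 = e.2.2

instance {n : ℕ} (π : Equiv.Perm (Fin n)) (e : (Fin n × Fin n) × (Fin n × Fin n)) :
    Decidable (hits π e) := by unfold hits; infer_instance

def Ngood {n : ℕ} (S : Finset ((Fin n × Fin n) × (Fin n × Fin n))) : ℕ :=
  (univ.filter fun π : Equiv.Perm (Fin n) => ∀ e ∈ S, ¬ hits π e).card

def Nhit {n : ℕ} (B : (Fin n × Fin n) × (Fin n × Fin n))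
    (S : Finset ((Fin n × Fin n) × (Fin n × Fin n))) : ℕ :=
  (univ.filter fun π : Equiv.Perm (Fin n) => hits π B ∧ ∀ e ∈ S, ¬ hits π e).card

lemma core {n : ℕ} (U : Finset ((Fin n × Fin n) × (Fin n × Fin n)))
    (B : (Fin n × Fin n) × (Fin n × Fin n)) (hB : B.1.1 ≠ B.2.1)
    (hU : ∀ e ∈ U, e.1.1 ≠ B.1.1 ∧ e.1.1 ≠ B.2.1 ∧ e.2.1 ≠ B.1.1 ∧ e.2.1 ≠ B.2.1 ∧
      e.1.2 ≠ B.1.2 ∧ e.1.2 ≠ B.2.2 ∧ e.2.2 ≠ B.1.2 ∧ e.2.2 ≠ B.2.2) :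
    Nhit B U * ((n - 2) * (n - 3)) ≤ Ngood U := by
  obtain ⟨⟨i, j⟩, i', j'⟩ := B
  simp only at hB hU
  classical
  set s : Finset (Fin n) := univ \ {i, i'} with hs
  have hscard : s.card = n - 2 := by
    rw [hs, Finset.card_sdiff_of_subset (Finset.subset_univ _), Finset.card_univ, Fintype.card_fin,
      Finset.card_pair hB]
  set P : Finset (Fin n × Fin n) := s.biUnion (fun a => {a} ×ˢ (s.erase a)) with hP
  have hPmem : ∀ p : Fin n × Fin n, p ∈ P ↔
      (p.1 ≠ i ∧ p.1 ≠ i' ∧ p.2 ≠ i ∧ p.2 ≠ i' ∧ p.2 ≠ p.1) := by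
    intro p
    simp only [hP, hs, Finset.mem_biUnion, Finset.mem_product, Finset.mem_erase,
      Finset.mem_sdiff, Finset.mem_univ, true_and, Finset.mem_insert, Finset.mem_singleton,
      Finset.mem_singleton]
    aesop
  have hPcard : P.card = (n - 2) * (n - 3) := by
    rw [hP, Finset.card_biUnion]
    · have hc : ∀ a ∈ s, ({a} ×ˢ s.erase a).card = n - 3 := by
        intro a ha
        rw [Finset.card_product, Finset.card_singleton, one_mul,
          Finset.card_erase_of_mem ha, hscard]
        omega
      rw [Finset.sum_congr rfl hc, Finset.sum_const, hscard, smul_eq_mul]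
    · intro a ha b hb hab
      rw [Function.onFun, Finset.disjoint_left]
      rintro ⟨x, y⟩ hx hy
      rw [Finset.mem_product, Finset.mem_singleton] at hx hy
      exact hab (hx.1 ▸ hy.1 ▸ rfl)
  have hle : (((univ.filter fun π : Equiv.Perm (Fin n) =>
      hits π ((i, j), i', j') ∧ ∀ e ∈ U, ¬ hits π e)) ×ˢ P).card ≤
      (univ.filter fun π : Equiv.Perm (Fin n) => ∀ e ∈ U, ¬ hits π e).card := by
    apply Finset.card_le_card_of_injOn
      (fun x => x.1 * Equiv.swap i x.2.1 * Equiv.swap i' x.2.2)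
    · rintro ⟨π, a, b⟩ hx
      rw [Finset.mem_coe, Finset.mem_product, Finset.mem_filter, hPmem] at hx
      obtain ⟨⟨-, hπB, hπU⟩, hai, hai', hbi, hbi', hba⟩ := hx
      obtain ⟨hπi, hπi'⟩ := hπB
      simp only at hπi hπi' hai hai' hbi hbi' hba ⊢
      have e3 : ∀ x, x ≠ i → x ≠ i' → x ≠ a → x ≠ b →
          (π * Equiv.swap i a * Equiv.swap i' b) x = π x := by
        intro x h1 h2 h3 h4
        simp only [Equiv.Perm.mul_apply]
        rw [Equiv.swap_apply_of_ne_of_ne h2 h4, Equiv.swap_apply_of_ne_of_ne h1 h3]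
      have ea : (π * Equiv.swap i a * Equiv.swap i' b) a = j := by
        simp only [Equiv.Perm.mul_apply]
        rw [Equiv.swap_apply_of_ne_of_ne hai' (Ne.symm hba), Equiv.swap_apply_right, hπi]
      have eb : (π * Equiv.swap i a * Equiv.swap i' b) b = j' := by
        simp only [Equiv.Perm.mul_apply]
        rw [Equiv.swap_apply_right, Equiv.swap_apply_of_ne_of_ne (Ne.symm hB) (Ne.symm hai'),
          hπi']
      rw [Finset.mem_coe, Finset.mem_filter]
      refine ⟨Finset.mem_univ _, ?_⟩
      rintro e he ⟨h1, h2⟩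
      obtain ⟨u1, u2, u3, u4, u5, u6, u7, u8⟩ := hU e he
      refine hπU e he ⟨?_, ?_⟩
      · by_cases hra : e.1.1 = a
        · rw [hra, ea] at h1; exact absurd h1.symm u5
        · by_cases hrb : e.1.1 = b
          · rw [hrb, eb] at h1; exact absurd h1.symm u6
          · rw [e3 _ u1 u2 hra hrb] at h1; exact h1
      · by_cases hra : e.2.1 = a
        · rw [hra, ea] at h2; exact absurd h2.symm u7
        · by_cases hrb : e.2.1 = b
          · rw [hrb, eb] at h2; exact absurd h2.symm u8
          · rw [e3 _ u3 u4 hra hrb] at h2; exact h2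
    · rintro ⟨π, a, b⟩ hx ⟨π', a', b'⟩ hy hfeq
      simp only [Finset.mem_coe, Finset.mem_product, Finset.mem_filter, hPmem] at hx hy
      obtain ⟨⟨-, ⟨hπi, hπi'⟩, -⟩, hai, hai', hbi, hbi', hba⟩ := hx
      obtain ⟨⟨-, ⟨hπi2, hπi2'⟩, -⟩, hai2, hai2', hbi2, hbi2', hba2⟩ := hy
      simp only at hfeq hπi hπi' hπi2 hπi2' hai hai' hbi hbi' hba hai2 hai2' hbi2 hbi2' hba2
      have ea : (π * Equiv.swap i a * Equiv.swap i' b) a = j := by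
        simp only [Equiv.Perm.mul_apply]
        rw [Equiv.swap_apply_of_ne_of_ne hai' (Ne.symm hba), Equiv.swap_apply_right, hπi]
      have eb : (π * Equiv.swap i a * Equiv.swap i' b) b = j' := by
        simp only [Equiv.Perm.mul_apply]
        rw [Equiv.swap_apply_right, Equiv.swap_apply_of_ne_of_ne (Ne.symm hB) (Ne.symm hai'),
          hπi']
      have ea' : (π' * Equiv.swap i a' * Equiv.swap i' b') a' = j := by
        simp only [Equiv.Perm.mul_apply]
        rw [Equiv.swap_apply_of_ne_of_ne hai2' (Ne.symm hba2), Equiv.swap_apply_right, hπi2]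
      have eb' : (π' * Equiv.swap i a' * Equiv.swap i' b') b' = j' := by
        simp only [Equiv.Perm.mul_apply]
        rw [Equiv.swap_apply_right, Equiv.swap_apply_of_ne_of_ne (Ne.symm hB) (Ne.symm hai2'),
          hπi2']
      rw [hfeq] at ea eb
      have haa : a = a' := (Equiv.injective _) (ea.trans ea'.symm)
      have hbb : b = b' := (Equiv.injective _) (eb.trans eb'.symm)
      subst haa; subst hbb
      have hππ : π = π' := mul_right_cancel (mul_right_cancel hfeq)
      rw [hππ]
  calc Nhit ((i, j), i', j') U * ((n - 2) * (n - 3))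
      = (((univ.filter fun π : Equiv.Perm (Fin n) =>
          hits π ((i, j), i', j') ∧ ∀ e ∈ U, ¬ hits π e)) ×ˢ P).card := by
        rw [Finset.card_product, hPcard]; rfl
    _ ≤ _ := hle

lemma nbhd {α : Type*} [DecidableEq α] {n k : ℕ} (A : Fin n → Fin n → α)
    (hA : ∀ v : α,
      ((Finset.univ ×ˢ Finset.univ).filter fun p : Fin n × Fin n => A p.1 p.2 = v).card ≤ k)
    (B : (Fin n × Fin n) × (Fin n × Fin n)) :
    ((Events A).filter fun e => e.1.1 = B.1.1 ∨ e.1.1 = B.2.1 ∨ e.2.1 = B.1.1 ∨ e.2.1 = B.2.1 ∨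
      e.1.2 = B.1.2 ∨ e.1.2 = B.2.2 ∨ e.2.2 = B.1.2 ∨ e.2.2 = B.2.2).card ≤ 4 * n * (k - 1) := by
  classical
  set Z : Finset (Fin n × Fin n) :=
    (({B.1.1, B.2.1} : Finset (Fin n)) ×ˢ univ) ∪
      (univ ×ˢ ({B.1.2, B.2.2} : Finset (Fin n))) with hZ
  have hZcard : Z.card ≤ 4 * n := by
    have h1 : (({B.1.1, B.2.1} : Finset (Fin n)) ×ˢ (univ : Finset (Fin n))).card ≤ 2 * n := by
      rw [Finset.card_product, Finset.card_univ, Fintype.card_fin]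
      have : ({B.1.1, B.2.1} : Finset (Fin n)).card ≤ 2 :=
        le_trans (Finset.card_insert_le _ _) (by simp)
      exact Nat.mul_le_mul_right n this
    have h2 : ((univ : Finset (Fin n)) ×ˢ ({B.1.2, B.2.2} : Finset (Fin n))).card ≤ 2 * n := by
      rw [Finset.card_product, Finset.card_univ, Fintype.card_fin]
      have : ({B.1.2, B.2.2} : Finset (Fin n)).card ≤ 2 :=
        le_trans (Finset.card_insert_le _ _) (by simp)
      calc n * ({B.1.2, B.2.2} : Finset (Fin n)).card ≤ n * 2 := Nat.mul_le_mul_left n this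
        _ = 2 * n := Nat.mul_comm n 2
    calc Z.card ≤ _ + _ := Finset.card_union_le _ _
      _ ≤ 4 * n := by omega
  have hper : ∀ z : Fin n × Fin n,
      ((Events A).filter fun e => e.1 = z ∨ e.2 = z).card ≤ k - 1 := by
    intro z
    have hzmem : z ∈ (univ ×ˢ univ).filter fun p : Fin n × Fin n => A p.1 p.2 = A z.1 z.2 := by
      simp
    have htarget :
        ((((univ : Finset (Fin n)) ×ˢ univ).filter fun p : Fin n × Fin n =>
          A p.1 p.2 = A z.1 z.2).erase z).card ≤ k - 1 := by
      rw [Finset.card_erase_of_mem hzmem]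
      exact Nat.sub_le_sub_right (hA _) 1
    refine le_trans (Finset.card_le_card_of_injOn
      (fun e => if e.1 = z then e.2 else e.1) ?_ ?_) htarget
    · intro e he
      rw [Finset.mem_coe, Finset.mem_filter] at he
      obtain ⟨heE, hez⟩ := he
      rw [Events, Finset.mem_filter] at heE
      obtain ⟨-, hlt, hne, hval⟩ := heE
      by_cases h1 : e.1 = z
      · simp only [if_pos h1]
        rw [Finset.mem_coe, Finset.mem_erase]
        refine ⟨?_, ?_⟩
        · intro hc
          rw [← h1] at hc
          rw [hc] at hlt
          exact lt_irrefl _ hlt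
        · rw [Finset.mem_filter]
          exact ⟨by simp, by rw [← hval, h1]⟩
      · have h2 : e.2 = z := hez.resolve_left h1
        simp only [if_neg h1]
        rw [Finset.mem_coe, Finset.mem_erase]
        refine ⟨h1, ?_⟩
        rw [Finset.mem_filter]
        exact ⟨by simp, by rw [hval, h2]⟩
    · intro e he f hf hef
      simp only [Finset.mem_coe, Finset.mem_filter] at he hf
      obtain ⟨heE, hez⟩ := he
      obtain ⟨hfE, hfz⟩ := hf
      rw [Events, Finset.mem_filter] at heE hfE
      simp only at hef
      by_cases h1 : e.1 = z <;> by_cases h2 : f.1 = z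
      · rw [if_pos h1, if_pos h2] at hef
        exact Prod.ext (h1.trans h2.symm) hef
      · rw [if_pos h1, if_neg h2] at hef
        have hf2 : f.2 = z := hfz.resolve_left h2
        exfalso
        have l1 : e.1.1 < e.2.1 := heE.2.1
        have l2 : f.1.1 < f.2.1 := hfE.2.1
        rw [h1, ← hf2] at l1
        rw [← hef] at l2
        exact lt_asymm l1 l2
      · rw [if_neg h1, if_pos h2] at hef
        have he2 : e.2 = z := hez.resolve_left h1
        exfalso
        have l1 : e.1.1 < e.2.1 := heE.2.1
        have l2 : f.1.1 < f.2.1 := hfE.2.1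
        rw [hef, he2, ← h2] at l1
        exact lt_asymm l1 l2
      · rw [if_neg h1, if_neg h2] at hef
        have he2 : e.2 = z := hez.resolve_left h1
        have hf2 : f.2 = z := hfz.resolve_left h2
        exact Prod.ext hef (he2.trans hf2.symm)
  have hsub : ((Events A).filter fun e =>
      e.1.1 = B.1.1 ∨ e.1.1 = B.2.1 ∨ e.2.1 = B.1.1 ∨ e.2.1 = B.2.1 ∨
      e.1.2 = B.1.2 ∨ e.1.2 = B.2.2 ∨ e.2.2 = B.1.2 ∨ e.2.2 = B.2.2) ⊆
      Z.biUnion fun z => (Events A).filter fun e => e.1 = z ∨ e.2 = z := by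
    intro e he
    rw [Finset.mem_filter] at he
    obtain ⟨heE, hor⟩ := he
    rw [Finset.mem_biUnion]
    rcases hor with h | h | h | h | h | h | h | h
    · exact ⟨e.1, by simp [hZ, h], by rw [Finset.mem_filter]; exact ⟨heE, Or.inl rfl⟩⟩
    · exact ⟨e.1, by simp [hZ, h], by rw [Finset.mem_filter]; exact ⟨heE, Or.inl rfl⟩⟩
    · exact ⟨e.2, by simp [hZ, h], by rw [Finset.mem_filter]; exact ⟨heE, Or.inr rfl⟩⟩
    · exact ⟨e.2, by simp [hZ, h], by rw [Finset.mem_filter]; exact ⟨heE, Or.inr rfl⟩⟩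
    · exact ⟨e.1, by simp [hZ, h], by rw [Finset.mem_filter]; exact ⟨heE, Or.inl rfl⟩⟩
    · exact ⟨e.1, by simp [hZ, h], by rw [Finset.mem_filter]; exact ⟨heE, Or.inl rfl⟩⟩
    · exact ⟨e.2, by simp [hZ, h], by rw [Finset.mem_filter]; exact ⟨heE, Or.inr rfl⟩⟩
    · exact ⟨e.2, by simp [hZ, h], by rw [Finset.mem_filter]; exact ⟨heE, Or.inr rfl⟩⟩
  calc ((Events A).filter _).card ≤ (Z.biUnion fun z =>
        (Events A).filter fun e => e.1 = z ∨ e.2 = z).card := Finset.card_le_card hsub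
    _ ≤ ∑ z ∈ Z, ((Events A).filter fun e => e.1 = z ∨ e.2 = z).card :=
        Finset.card_biUnion_le
    _ ≤ ∑ _z ∈ Z, (k - 1) := Finset.sum_le_sum fun z _ => hper z
    _ = Z.card * (k - 1) := by rw [Finset.sum_const, smul_eq_mul]
    _ ≤ 4 * n * (k - 1) := Nat.mul_le_mul_right _ hZcard


lemma anal {n k : ℕ} (hk2 : 2 ≤ k) (hn : 12 ≤ n)
    (hkn : (k : ℝ) ≤ ((n : ℝ) - 1) / (4 * Real.exp 1)) (m : ℕ) (hm : m ≤ 4 * n * (k - 1)) :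
    (1 : ℝ) / (((n - 2) * (n - 3) : ℕ) : ℝ) ≤
      (1 / (((4 * n * (k - 1) : ℕ) : ℝ) + 1)) *
        (1 - 1 / (((4 * n * (k - 1) : ℕ) : ℝ) + 1)) ^ m := by
  have he1 : (2.7 : ℝ) < Real.exp 1 := by
    have := Real.exp_one_gt_d9; linarith
  have he2 : Real.exp 1 < 2.7182818286 := Real.exp_one_lt_d9
  set Dn : ℕ := 4 * n * (k - 1) with hDn
  have hDn48 : 48 ≤ Dn := by
    have h1 : 1 ≤ k - 1 := by omega
    calc 48 = 4 * 12 * 1 := by norm_num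
      _ ≤ 4 * n * (k - 1) := Nat.mul_le_mul (Nat.mul_le_mul_left 4 hn) h1
  set D : ℝ := (Dn : ℝ) with hD
  have hD48 : (48 : ℝ) ≤ D := by rw [hD]; exact_mod_cast hDn48
  have hDpos : (0 : ℝ) < D := by linarith
  have hnR : (12 : ℝ) ≤ (n : ℝ) := by exact_mod_cast hn
  have hcast : (((n - 2) * (n - 3) : ℕ) : ℝ) = ((n : ℝ) - 2) * ((n : ℝ) - 3) := by
    have h2 : 2 ≤ n := by omega
    have h3 : 3 ≤ n := by omega
    push_cast [Nat.cast_sub h2, Nat.cast_sub h3]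
    ring
  have hDval : D = 4 * (n : ℝ) * ((k : ℝ) - 1) := by
    rw [hD, hDn]
    have h1 : 1 ≤ k := by omega
    push_cast [Nat.cast_sub h1]
    ring
  have h4ek : 4 * Real.exp 1 * (k : ℝ) ≤ (n : ℝ) - 1 := by
    have h4e : (0 : ℝ) < 4 * Real.exp 1 := by positivity
    have := (le_div_iff₀ h4e).mp hkn
    linarith
  have hmain : Real.exp 1 * (D + 1) ≤ ((n : ℝ) - 2) * ((n : ℝ) - 3) := by
    rw [hDval]
    nlinarith [mul_le_mul_of_nonneg_right h4ek (by linarith : (0 : ℝ) ≤ (n : ℝ)), he1, he2, hnR]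
  have hq1 : 1 - 1 / (D + 1) = D / (D + 1) := by
    field_simp
    ring
  have hexp : Real.exp (-(1 / D)) ≤ D / (D + 1) := by
    have h := Real.add_one_le_exp (1 / D)
    have hpos : (0 : ℝ) < 1 / D + 1 := by positivity
    calc Real.exp (-(1 / D)) = (Real.exp (1 / D))⁻¹ := Real.exp_neg _
      _ ≤ (1 / D + 1)⁻¹ := by
          apply inv_anti₀ hpos
          linarith
      _ = D / (D + 1) := by
          rw [div_add' _ _ _ (ne_of_gt hDpos), inv_div]
          ring_nf
  have hpow1 : Real.exp (-1) ≤ (D / (D + 1)) ^ Dn := by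
    have heq : Real.exp (-(1 / D)) ^ Dn = Real.exp (-1) := by
      rw [← Real.exp_nat_mul]
      congr 1
      rw [hD]
      field_simp
    calc Real.exp (-1) = Real.exp (-(1 / D)) ^ Dn := heq.symm
      _ ≤ (D / (D + 1)) ^ Dn := pow_le_pow_left₀ (Real.exp_nonneg _) hexp Dn
  have hpowm : (D / (D + 1)) ^ Dn ≤ (D / (D + 1)) ^ m := by
    apply pow_le_pow_of_le_one (by positivity)
    · rw [div_le_one (by linarith)]; linarith
    · exact hm
  rw [hcast, hq1]
  have hfin1 : (1 : ℝ) / (((n : ℝ) - 2) * ((n : ℝ) - 3)) ≤ 1 / (Real.exp 1 * (D + 1)) := by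
    apply one_div_le_one_div_of_le
    · positivity
    · exact hmain
  have hfin2 : (1 : ℝ) / (Real.exp 1 * (D + 1)) = (1 / (D + 1)) * Real.exp (-1) := by
    rw [Real.exp_neg]
    field_simp
  have hfin3 : (1 / (D + 1)) * Real.exp (-1) ≤ (1 / (D + 1)) * (D / (D + 1)) ^ m := by
    apply mul_le_mul_of_nonneg_left _ (by positivity)
    exact le_trans hpow1 hpowm
  linarith

lemma key {α : Type*} [DecidableEq α] {n k : ℕ} (A : Fin n → Fin n → α)
    (hA : ∀ v : α,
      ((Finset.univ ×ˢ Finset.univ).filter fun p : Fin n × Fin n => A p.1 p.2 = v).card ≤ k)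
    (hk2 : 2 ≤ k) (hn : 12 ≤ n)
    (hkn : (k : ℝ) ≤ ((n : ℝ) - 1) / (4 * Real.exp 1)) :
    ∀ (m : ℕ) (S : Finset ((Fin n × Fin n) × (Fin n × Fin n))), S ⊆ Events A → S.card = m →
      ∀ B ∈ Events A, B ∉ S →
        (Nhit B S : ℝ) ≤ (1 / (((4 * n * (k - 1) : ℕ) : ℝ) + 1)) * (Ngood S : ℝ) := by
  intro m
  induction m using Nat.strong_induction_on with
  | _ m IH =>
  intro S hSE hScard B hBE hBS
  classical
  set q : ℝ := 1 / (((4 * n * (k - 1) : ℕ) : ℝ) + 1) with hq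
  have hq0 : 0 ≤ q := by positivity
  have hDn48 : (48 : ℕ) ≤ 4 * n * (k - 1) := by
    have h1 : 1 ≤ k - 1 := by omega
    calc (48 : ℕ) = 4 * 12 * 1 := by norm_num
      _ ≤ 4 * n * (k - 1) := Nat.mul_le_mul (Nat.mul_le_mul_left 4 hn) h1
  have hD48 : (48 : ℝ) ≤ ((4 * n * (k - 1) : ℕ) : ℝ) := by exact_mod_cast hDn48
  have hq1 : q < 1 := by
    rw [hq, div_lt_one (by linarith)]
    linarith
  set T : Finset ((Fin n × Fin n) × (Fin n × Fin n)) := S.filter (fun e =>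
      e.1.1 = B.1.1 ∨ e.1.1 = B.2.1 ∨ e.2.1 = B.1.1 ∨ e.2.1 = B.2.1 ∨
      e.1.2 = B.1.2 ∨ e.1.2 = B.2.2 ∨ e.2.2 = B.1.2 ∨ e.2.2 = B.2.2) with hT
  set U : Finset ((Fin n × Fin n) × (Fin n × Fin n)) := S.filter (fun e =>
      ¬(e.1.1 = B.1.1 ∨ e.1.1 = B.2.1 ∨ e.2.1 = B.1.1 ∨ e.2.1 = B.2.1 ∨
      e.1.2 = B.1.2 ∨ e.1.2 = B.2.2 ∨ e.2.2 = B.1.2 ∨ e.2.2 = B.2.2)) with hU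
  have hUS : U ⊆ S := Finset.filter_subset _ _
  have hUT : T ∪ U = S := Finset.filter_union_filter_not_eq _ S
  have hTD : T.card ≤ 4 * n * (k - 1) :=
    le_trans (Finset.card_le_card (Finset.filter_subset_filter _ hSE)) (nbhd A hA B)
  have hBrow : B.1.1 ≠ B.2.1 := by
    have hlt := (Finset.mem_filter.mp hBE).2.1
    exact ne_of_lt hlt
  have hUcond : ∀ e ∈ U, e.1.1 ≠ B.1.1 ∧ e.1.1 ≠ B.2.1 ∧ e.2.1 ≠ B.1.1 ∧ e.2.1 ≠ B.2.1 ∧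
      e.1.2 ≠ B.1.2 ∧ e.1.2 ≠ B.2.2 ∧ e.2.2 ≠ B.1.2 ∧ e.2.2 ≠ B.2.2 := by
    intro e he
    have h := (Finset.mem_filter.mp he).2
    push_neg at h
    exact h
  have hcore := core U B hBrow hUcond
  have hnn : 0 < ((n - 2) * (n - 3) : ℕ) := Nat.mul_pos (by omega) (by omega)
  have hnnR : (0 : ℝ) < (((n - 2) * (n - 3) : ℕ) : ℝ) := by exact_mod_cast hnn
  -- the chain lemma
  have hchain : ∀ T' : Finset ((Fin n × Fin n) × (Fin n × Fin n)), T' ⊆ T →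
      (1 - q) ^ T'.card * (Ngood U : ℝ) ≤ (Ngood (U ∪ T') : ℝ) := by
    intro T'
    induction T' using Finset.induction_on with
    | empty => intro _; simp
    | @insert a s has ih =>
      intro hsub
      have haT : a ∈ T := hsub (Finset.mem_insert_self _ _)
      have hsT : s ⊆ T := (Finset.subset_insert _ _).trans hsub
      have ihs := ih hsT
      have hWS : (U ∪ s) ⊆ S := Finset.union_subset hUS (hsT.trans (Finset.filter_subset _ _))
      have haS : a ∈ S := (Finset.filter_subset _ _) haT
      have haW : a ∉ U ∪ s := by
        intro h
        rcases Finset.mem_union.mp h with h | h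
        · exact (Finset.mem_filter.mp h).2 (Finset.mem_filter.mp haT).2
        · exact has h
      have hWcard : (U ∪ s).card < m := by
        rw [← hScard]
        exact Finset.card_lt_card ⟨hWS, fun hcon => haW (hcon haS)⟩
      have haE : a ∈ Events A := hSE haS
      have hkeyC := IH (U ∪ s).card hWcard (U ∪ s) (hWS.trans hSE) rfl a haE haW
      have hsplit : Ngood (insert a (U ∪ s)) + Nhit a (U ∪ s) = Ngood (U ∪ s) := by
        have h1 : (univ.filter fun π : Equiv.Perm (Fin n) => ∀ e ∈ insert a (U ∪ s), ¬ hits π e)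
            = (univ.filter fun π : Equiv.Perm (Fin n) =>
                ∀ e ∈ U ∪ s, ¬ hits π e).filter (fun π => ¬ hits π a) := by
          rw [Finset.filter_filter]
          ext π
          simp only [Finset.mem_filter, Finset.mem_univ, true_and, Finset.mem_insert]
          constructor
          · intro h
            exact ⟨fun e he => h e (Or.inr he), h a (Or.inl rfl)⟩
          · rintro ⟨h1, h2⟩ e he
            rcases he with rfl | he
            · exact h2
            · exact h1 e he
        have h2 : (univ.filter fun π : Equiv.Perm (Fin n) =>
              hits π a ∧ ∀ e ∈ U ∪ s, ¬ hits π e)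
            = (univ.filter fun π : Equiv.Perm (Fin n) =>
                ∀ e ∈ U ∪ s, ¬ hits π e).filter (fun π => hits π a) := by
          rw [Finset.filter_filter]
          ext π
          simp only [Finset.mem_filter, Finset.mem_univ, true_and]
          tauto
        rw [Ngood, Ngood, Nhit, h1, h2, add_comm]
        exact Finset.card_filter_add_card_filter_not _
      have hstep : (1 - q) * (Ngood (U ∪ s) : ℝ) ≤ (Ngood (insert a (U ∪ s)) : ℝ) := by
        have hcast : (Ngood (U ∪ s) : ℝ)
            = (Ngood (insert a (U ∪ s)) : ℝ) + (Nhit a (U ∪ s) : ℝ) := by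
          exact_mod_cast hsplit.symm
        nlinarith [hkeyC]
      rw [Finset.card_insert_of_notMem has, Finset.union_insert]
      calc (1 - q) ^ (s.card + 1) * (Ngood U : ℝ)
          = (1 - q) * ((1 - q) ^ s.card * (Ngood U : ℝ)) := by ring
        _ ≤ (1 - q) * (Ngood (U ∪ s) : ℝ) :=
            mul_le_mul_of_nonneg_left ihs (by linarith)
        _ ≤ (Ngood (insert a (U ∪ s)) : ℝ) := hstep
  have hchainS : (1 - q) ^ T.card * (Ngood U : ℝ) ≤ (Ngood S : ℝ) := by
    have := hchain T (subset_refl T)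
    rwa [Finset.union_comm, hUT] at this
  have hmono : Nhit B S ≤ Nhit B U := by
    apply Finset.card_le_card
    intro π hπ
    rw [Finset.mem_filter] at hπ ⊢
    exact ⟨hπ.1, hπ.2.1, fun e he => hπ.2.2 e (hUS he)⟩
  have hcoreR : (Nhit B U : ℝ) * (((n - 2) * (n - 3) : ℕ) : ℝ) ≤ (Ngood U : ℝ) := by
    exact_mod_cast hcore
  have hanal := anal hk2 hn hkn T.card hTD
  rw [← hq] at hanal
  calc (Nhit B S : ℝ) ≤ (Nhit B U : ℝ) := by exact_mod_cast hmono
    _ ≤ (Ngood U : ℝ) / (((n - 2) * (n - 3) : ℕ) : ℝ) := by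
        rw [le_div_iff₀ hnnR]; exact hcoreR
    _ = (1 / (((n - 2) * (n - 3) : ℕ) : ℝ)) * (Ngood U : ℝ) := by ring
    _ ≤ (q * (1 - q) ^ T.card) * (Ngood U : ℝ) :=
        mul_le_mul_of_nonneg_right hanal (Nat.cast_nonneg _)
    _ = q * ((1 - q) ^ T.card * (Ngood U : ℝ)) := by ring
    _ ≤ q * (Ngood S : ℝ) := mul_le_mul_of_nonneg_left hchainS hq0

lemma pos {α : Type*} [DecidableEq α] {n k : ℕ} (A : Fin n → Fin n → α)
    (hA : ∀ v : α,
      ((Finset.univ ×ˢ Finset.univ).filter fun p : Fin n × Fin n => A p.1 p.2 = v).card ≤ k)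
    (hk2 : 2 ≤ k) (hn : 12 ≤ n)
    (hkn : (k : ℝ) ≤ ((n : ℝ) - 1) / (4 * Real.exp 1)) :
    ∀ (m : ℕ) (S : Finset ((Fin n × Fin n) × (Fin n × Fin n))), S ⊆ Events A → S.card = m →
      0 < Ngood S := by
  intro m
  induction m using Nat.strong_induction_on with
  | _ m IH =>
  intro S hSE hScard
  classical
  rcases Finset.eq_empty_or_nonempty S with rfl | ⟨C, hC⟩
  · rw [Ngood]
    have : (univ.filter fun π : Equiv.Perm (Fin n) => ∀ e ∈ (∅ : Finset _), ¬ hits π e)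
        = univ := by
      apply Finset.filter_true_of_mem
      intro π _ e he
      exact absurd he (Finset.notMem_empty e)
    rw [this, Finset.card_univ]
    exact Fintype.card_pos
  · set q : ℝ := 1 / (((4 * n * (k - 1) : ℕ) : ℝ) + 1) with hq
    have hDn48 : (48 : ℕ) ≤ 4 * n * (k - 1) := by
      have h1 : 1 ≤ k - 1 := by omega
      calc (48 : ℕ) = 4 * 12 * 1 := by norm_num
        _ ≤ 4 * n * (k - 1) := Nat.mul_le_mul (Nat.mul_le_mul_left 4 hn) h1
    have hD48 : (48 : ℝ) ≤ ((4 * n * (k - 1) : ℕ) : ℝ) := by exact_mod_cast hDn48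
    have hq1 : q < 1 := by
      rw [hq, div_lt_one (by linarith)]
      linarith
    have hCE : C ∈ Events A := hSE hC
    have hEcard : (S.erase C).card < m := by
      rw [← hScard]
      exact Finset.card_erase_lt_of_mem hC
    have hkeyC := key A hA hk2 hn hkn (S.erase C).card (S.erase C)
      ((Finset.erase_subset _ _).trans hSE) rfl C hCE (Finset.notMem_erase _ _)
    rw [← hq] at hkeyC
    have hsplit : Ngood S + Nhit C (S.erase C) = Ngood (S.erase C) := by
      have h0 : insert C (S.erase C) = S := Finset.insert_erase hC
      have h1 : (univ.filter fun π : Equiv.Perm (Fin n) => ∀ e ∈ S, ¬ hits π e)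
          = (univ.filter fun π : Equiv.Perm (Fin n) =>
              ∀ e ∈ S.erase C, ¬ hits π e).filter (fun π => ¬ hits π C) := by
        rw [Finset.filter_filter]
        ext π
        simp only [Finset.mem_filter, Finset.mem_univ, true_and]
        constructor
        · intro h
          exact ⟨fun e he => h e (Finset.erase_subset _ _ he), h C hC⟩
        · rintro ⟨h1, h2⟩ e he
          by_cases hec : e = C
          · rw [hec]; exact h2
          · exact h1 e (Finset.mem_erase.mpr ⟨hec, he⟩)
      have h2 : (univ.filter fun π : Equiv.Perm (Fin n) =>
            hits π C ∧ ∀ e ∈ S.erase C, ¬ hits π e)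
          = (univ.filter fun π : Equiv.Perm (Fin n) =>
              ∀ e ∈ S.erase C, ¬ hits π e).filter (fun π => hits π C) := by
        rw [Finset.filter_filter]
        ext π
        simp only [Finset.mem_filter, Finset.mem_univ, true_and]
        tauto
      rw [Ngood, Ngood, Nhit, h1, h2, add_comm]
      exact Finset.card_filter_add_card_filter_not _
    have hIH : 0 < Ngood (S.erase C) :=
      IH (S.erase C).card hEcard (S.erase C) ((Finset.erase_subset _ _).trans hSE) rfl
    have hIHR : (0 : ℝ) < (Ngood (S.erase C) : ℝ) := by exact_mod_cast hIH
    have hcast : (Ngood S : ℝ) + (Nhit C (S.erase C) : ℝ) = (Ngood (S.erase C) : ℝ) := by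
      exact_mod_cast hsplit
    have hfin : (0 : ℝ) < (Ngood S : ℝ) := by nlinarith [hkeyC]
    exact_mod_cast hfin

end LatinAux

/-- **Latin transversals.** Let `A` be an `n × n` matrix and `k` a positive integer with
`k ≤ (n-1)/(4e)`. If no value appears in more than `k` entries of `A`, then `A` has a
Latin transversal: a permutation `π` of `[n]` such that the entries `A i (π i)` are
pairwise distinct. -/
theorem latin_transversal {α : Type*} [DecidableEq α] (n k : ℕ) (hk : 0 < k)
    (hkn : (k : ℝ) ≤ ((n : ℝ) - 1) / (4 * Real.exp 1))
    (A : Fin n → Fin n → α)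
    (hA : ∀ v : α,
      ((Finset.univ ×ˢ Finset.univ).filter fun p : Fin n × Fin n => A p.1 p.2 = v).card
        ≤ k) :
    ∃ π : Equiv.Perm (Fin n), Function.Injective fun i => A i (π i) := by
  classical
  have he1 : (2.7 : ℝ) < Real.exp 1 := by
    have := Real.exp_one_gt_d9; linarith
  have h4e : (0 : ℝ) < 4 * Real.exp 1 := by positivity
  have hk1 : (1 : ℝ) ≤ (k : ℝ) := by exact_mod_cast hk
  have hd := (le_div_iff₀ h4e).mp hkn
  have hn : 12 ≤ n := by
    by_contra hcon
    push_neg at hcon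
    have : (n : ℝ) ≤ 11 := by exact_mod_cast Nat.lt_succ_iff.mp hcon
    nlinarith
  have hπ : ∃ π : Equiv.Perm (Fin n), ∀ e ∈ LatinAux.Events A, ¬ LatinAux.hits π e := by
    by_cases hk2 : 2 ≤ k
    · have hpos := LatinAux.pos A hA hk2 hn hkn (LatinAux.Events A).card
        (LatinAux.Events A) subset_rfl rfl
      rw [LatinAux.Ngood] at hpos
      obtain ⟨π, hmem⟩ := Finset.card_pos.mp hpos
      exact ⟨π, (Finset.mem_filter.mp hmem).2⟩
    · have hk1' : k = 1 := by omega
      refine ⟨1, fun e he => ?_⟩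
      exfalso
      rw [LatinAux.Events, Finset.mem_filter] at he
      obtain ⟨-, hlt, hne, hval⟩ := he
      have hne12 : e.1 ≠ e.2 := by
        intro hcon
        rw [hcon] at hlt
        exact lt_irrefl _ hlt
      have hsub : ({e.1, e.2} : Finset (Fin n × Fin n)) ⊆
          (Finset.univ ×ˢ Finset.univ).filter
            (fun p : Fin n × Fin n => A p.1 p.2 = A e.2.1 e.2.2) := by
        intro p hp
        rw [Finset.mem_insert, Finset.mem_singleton] at hp
        rw [Finset.mem_filter]
        rcases hp with rfl | rfl
        · exact ⟨by simp, hval⟩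
        · exact ⟨by simp, rfl⟩
      have h2 : 2 ≤ ((Finset.univ ×ˢ Finset.univ).filter
          (fun p : Fin n × Fin n => A p.1 p.2 = A e.2.1 e.2.2)).card := by
        have hcard : ({e.1, e.2} : Finset (Fin n × Fin n)).card = 2 :=
          Finset.card_pair hne12
        rw [← hcard]
        exact Finset.card_le_card hsub
      have := hA (A e.2.1 e.2.2)
      omega
  obtain ⟨π, hgood⟩ := hπ
  refine ⟨π, ?_⟩
  intro i i' h
  by_contra hne
  simp only at h
  rcases lt_or_gt_of_ne hne with hlt | hlt
  · refine hgood ((i, π i), (i', π i')) ?_ ⟨rfl, rfl⟩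
    rw [LatinAux.Events, Finset.mem_filter]
    exact ⟨Finset.mem_univ _, hlt, fun hc => hne (π.injective hc), h⟩
  · refine hgood ((i', π i'), (i, π i)) ?_ ⟨rfl, rfl⟩
    rw [LatinAux.Events, Finset.mem_filter]
    exact ⟨Finset.mem_univ _, hlt, fun hc => hne (π.injective hc).symm, h.symm⟩
end

section
/- Let A = (a_{i,j}) be an n × n matrix in which no value appears in more than k entries. Fix a pair (I,J) with I = {i,i'} ⊆ [n], i < i', J = {j,j'} ⊆ [n], j ≠ j', and a_{i,j} = a_{i',j'}. Then the number of pairs (I_1, J_1) ≠ (I,J), with I_1 = {i_1,i_1'} ⊆ [n], i_1 < i_1', J_1 = {j_1,j_1'} ⊆ [n], j_1 ≠ j_1', a_{i_1,j_1} = a_{i_1',j_1'}, and such that I ∩ I_1 ≠ ∅ or J ∩ J_1 ≠ ∅, is at most 4nk − 1. -/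
open Finset

/-! Read a quadruple `(i₁, i₁', j₁, j₁')` as the pair of cells `(i₁, j₁), (i₁', j₁')` carrying
equal entries. A counted pair meets `I` or `J` exactly when one of its two cells lies on the cross
formed by rows `i, i'` and columns `j, j'`, which has at most `4n` cells. Sending each pair to
(its cell on the cross, its other cell) is injective because `i₁ < i₁'` fixes the order of the two
cells, and each cell of the cross has at most `k` partners with the same entry. The pair `(I, J)`
itself is one of these `4nk` candidates, which accounts for the `- 1`. -/

section Pairs

variable {β α : Type*} [Fintype β] [DecidableEq β] [DecidableEq α]

theorem card_filter_fst_mem_eq_le_mul (A : β → α) {k : ℕ} (hA : ∀ v, #{b | A b = v} ≤ k)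
    (L : Finset β) : #{p : β × β | p.1 ∈ L ∧ A p.2 = A p.1} ≤ k * #L := by
  refine card_le_mul_card_image_of_maps_to (f := Prod.fst) (fun p hp => (mem_filter.1 hp).2.1)
    k fun c _ => ?_
  calc #{p ∈ ({p : β × β | p.1 ∈ L ∧ A p.2 = A p.1} : Finset _) | p.1 = c}
      ≤ #{d | A d = A c} :=
        card_le_card_of_injOn Prod.snd
          (fun p hp => by
            simp only [mem_coe, mem_filter, mem_univ, true_and] at hp ⊢
            rw [hp.1.2, hp.2])
          (fun p hp q hq hpq => by
            simp only [mem_coe, mem_filter, mem_univ, true_and] at hp hq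
            exact Prod.ext (hp.2.trans hq.2.symm) hpq)
    _ ≤ k := hA (A c)

theorem card_filter_asymm_meeting_le (r : β → β → Prop) [DecidableRel r]
    (hr : ∀ a b, r a b → ¬ r b a) (A : β → α) (L : Finset β) :
    #{p : β × β | r p.1 p.2 ∧ A p.1 = A p.2 ∧ (p.1 ∈ L ∨ p.2 ∈ L)}
      ≤ #{p : β × β | p.1 ∈ L ∧ A p.2 = A p.1} := by
  refine card_le_card_of_injOn (fun p => if p.1 ∈ L then p else p.swap) (fun p hp => ?_) ?_
  · simp only [mem_coe, mem_filter, mem_univ, true_and] at hp ⊢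
    obtain ⟨-, hA, hL⟩ := hp
    split_ifs with h
    · exact ⟨h, hA.symm⟩
    · exact ⟨hL.resolve_left h, hA⟩
  · intro p hp q hq hpq
    simp only [mem_coe, mem_filter, mem_univ, true_and] at hp hq
    dsimp only at hpq
    split_ifs at hpq with h₁ h₂ h₂
    · exact hpq
    · exact absurd (hpq ▸ hq.1) (hr _ _ hp.1)
    · exact absurd (hpq ▸ hp.1) (hr _ _ hq.1)
    · exact Prod.swap_injective hpq

end Pairs

def cellPair {ι κ : Type*} (q : ι × ι × κ × κ) : (ι × κ) × (ι × κ) :=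
  ((q.1, q.2.2.1), (q.2.1, q.2.2.2))

theorem cellPair_injective {ι κ : Type*} : Function.Injective (cellPair : ι × ι × κ × κ → _) := by
  rintro ⟨a, b, c, d⟩ ⟨a', b', c', d'⟩ h
  simp only [cellPair, Prod.mk.injEq] at h
  simp [h]

section Cross

variable {ι κ : Type*} [Fintype ι] [Fintype κ] [DecidableEq ι] [DecidableEq κ]

def cross (I : Finset ι) (J : Finset κ) : Finset (ι × κ) :=
  I ×ˢ univ ∪ univ ×ˢ J

theorem mem_cross {I : Finset ι} {J : Finset κ} {c : ι × κ} :
    c ∈ cross I J ↔ c.1 ∈ I ∨ c.2 ∈ J := by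
  simp [cross]

theorem card_cross_le (I : Finset ι) (J : Finset κ) :
    #(cross I J) ≤ #I * Fintype.card κ + Fintype.card ι * #J :=
  (card_union_le _ _).trans_eq (by simp [card_product])

end Cross

theorem latin_transversal_degree_bound_general {α : Type*} [DecidableEq α] (n k : ℕ)
    (A : Fin n → Fin n → α)
    (hA : ∀ v : α,
      ((Finset.univ ×ˢ Finset.univ).filter fun p : Fin n × Fin n => A p.1 p.2 = v).card
        ≤ k)
    (i i' j j' : Fin n) (hii : i < i') (ha : A i j = A i' j') :
    (Finset.univ.filter fun q : Fin n × Fin n × Fin n × Fin n =>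
        q.1 < q.2.1 ∧ q.2.2.1 ≠ q.2.2.2 ∧ A q.1 q.2.2.1 = A q.2.1 q.2.2.2 ∧
        q ≠ (i, i', j, j') ∧
        ((({q.1, q.2.1} : Finset (Fin n)) ∩ {i, i'}).Nonempty ∨
          (({q.2.2.1, q.2.2.2} : Finset (Fin n)) ∩ {j, j'}).Nonempty)).card
      ≤ 4 * n * k - 1 := by
  set L := cross {i, i'} {j, j'}
  set P : Finset ((Fin n × Fin n) × (Fin n × Fin n)) :=
    {p | p.1.1 < p.2.1 ∧ A p.1.1 p.1.2 = A p.2.1 p.2.2 ∧ (p.1 ∈ L ∨ p.2 ∈ L)}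
  have hP0 : cellPair (i, i', j, j') ∈ P := by
    simp [P, L, cellPair, mem_cross, hii, ha]
  have hP : #P ≤ 4 * n * k := calc
    #P ≤ k * #L :=
      (card_filter_asymm_meeting_le (fun c d => c.1 < d.1) (fun _ _ h => h.asymm) _ L).trans
        (card_filter_fst_mem_eq_le_mul _ (by simpa [univ_product_univ] using hA) L)
    _ ≤ k * (2 * n + n * 2) :=
      Nat.mul_le_mul_left k <| (card_cross_le _ _).trans <| by
        gcongr <;> simp [card_le_two]
    _ = 4 * n * k := by ring
  calc _ ≤ #(P.erase (cellPair (i, i', j, j'))) := by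
        refine card_le_card_of_injOn cellPair (fun q hq => ?_) cellPair_injective.injOn
        simp only [mem_coe, mem_filter, mem_univ, true_and, mem_erase,
          cellPair_injective.ne_iff] at hq ⊢
        obtain ⟨hlt, -, hq, hne, hmeet⟩ := hq
        refine ⟨hne, ?_⟩
        simp only [P, L, cellPair, mem_filter, mem_univ, true_and, mem_cross]
        refine ⟨hlt, hq, ?_⟩
        simp only [Finset.Nonempty, mem_inter, mem_insert, mem_singleton] at hmeet
        grind
    _ = #P - 1 := card_erase_of_mem hP0
    _ ≤ 4 * n * k - 1 := Nat.sub_le_sub_right hP 1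

/-- Let `A` be an `n × n` matrix in which no value appears in more than `k` entries.
Fix `(I, J)` with `I = {i, i'}`, `i < i'`, `J = {j, j'}`, `j ≠ j'` and
`A i j = A i' j'`. Then the number of tuples `(I₁, J₁) ≠ (I, J)` (encoded as quadruples
`(i₁, i₁', j₁, j₁')` with `i₁ < i₁'`, `j₁ ≠ j₁'`, `A i₁ j₁ = A i₁' j₁'`) such that
`I ∩ I₁ ≠ ∅` or `J ∩ J₁ ≠ ∅` is at most `4 * n * k - 1`. -/
theorem latin_transversal_degree_bound {α : Type*} [DecidableEq α] (n k : ℕ)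
    (A : Fin n → Fin n → α)
    (hA : ∀ v : α,
      ((Finset.univ ×ˢ Finset.univ).filter fun p : Fin n × Fin n => A p.1 p.2 = v).card
        ≤ k)
    (i i' j j' : Fin n) (hii : i < i') (hjj : j ≠ j') (ha : A i j = A i' j') :
    (Finset.univ.filter fun q : Fin n × Fin n × Fin n × Fin n =>
        q.1 < q.2.1 ∧ q.2.2.1 ≠ q.2.2.2 ∧ A q.1 q.2.2.1 = A q.2.1 q.2.2.2 ∧
        q ≠ (i, i', j, j') ∧
        ((({q.1, q.2.1} : Finset (Fin n)) ∩ {i, i'}).Nonempty ∨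
          (({q.2.2.1, q.2.2.2} : Finset (Fin n)) ∩ {j, j'}).Nonempty)).card
      ≤ 4 * n * k - 1 :=
  latin_transversal_degree_bound_general n k A hA i i' j j' hii ha
end
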